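/- arXiv:2112.00691 — 5 statements merged into one kernel-verified Lean document; each statement's English description precedes it below -/
import Mathlib

section
/- Let γ : [0,1] → ℝ² be a continuous injective curve that is positive (i.e., λ₂(γ([s,t])) > 0 whenever 0 ≤ s < t ≤ 1) and satisfies λ₂(γ([0,1])) = β with β > 0. Then there exists an increasing homeomorphism h : [0,1] → [0,1] such that the curve γ₁ = γ ∘ h is homogeneously parametrized with factor β, i.e., λ₂(γ₁(E)) = β · λ₁(E) for every Lebesgue-measurable set E ⊆ [0,1]. -/
/-!
Pull `λ₂` back along `γ` to the measure `A ↦ λ₂(γ(A ∩ [0,1]))` on the line and normalise it to a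
probability measure. Points have no area, so its distribution function `φ` is continuous; every
subarc has positive area, so `φ` is strictly increasing on `[0,1]`, with `φ 0 = 0` and `φ 1 = 1`.
For `h = φ⁻¹` this gives `λ₂(γ(h([0,m]))) = β φ(h m) = β m`. Since `γ ∘ h` is a Borel isomorphism
of `[0,1]` onto its image, `E ↦ λ₂(γ(h(E)))` is a finite measure; it agrees with `β λ₁` on initial
segments, hence everywhere.
-/

open MeasureTheory Set ProbabilityTheory

namespace MeasureTheory.Measure

variable {α β : Type*} [MeasurableSpace α] [MeasurableSpace β]

noncomputable def comapOn (f : α → β) (s : Set α) (μ : Measure β) : Measure α :=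
  (μ.comap (s.domRestrict f)).map (↑)

theorem comapOn_apply {f : α → β} {s : Set α} (hs : MeasurableSet s)
    (hf : MeasurableEmbedding (s.domRestrict f)) (μ : Measure β) (A : Set α) :
    comapOn f s μ A = μ (f '' (A ∩ s)) := by
  rw [comapOn, (MeasurableEmbedding.subtype_coe hs).map_apply, hf.comap_apply, image_domRestrict]

end MeasureTheory.Measure

theorem Set.Iic_inter_Icc {α : Type*} [LinearOrder α] (t a b : α) :
    Iic t ∩ Icc a b = Icc a (min t b) := by
  ext
  simp only [mem_inter_iff, mem_Iic, mem_Icc, le_min_iff]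
  tauto

namespace ProbabilityTheory

variable {μ : Measure ℝ} [IsProbabilityMeasure μ]

theorem continuous_cdf [NullSingletonClass μ] : Continuous (cdf μ) := by
  refine continuous_iff_continuousAt.2 fun x => ?_
  rw [(monotone_cdf μ).continuousAt_iff_leftLim_eq_rightLim, StieltjesFunction.rightLim_eq]
  have h := (cdf μ).measure_singleton x
  rw [measure_cdf, measure_singleton, eq_comm, ENNReal.ofReal_eq_zero, sub_nonpos] at h
  exact le_antisymm ((monotone_cdf μ).leftLim_le le_rfl) h

theorem cdf_lt_cdf {s t : ℝ} (h : 0 < μ (Ioc s t)) : cdf μ s < cdf μ t := by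
  rwa [← measure_cdf μ, StieltjesFunction.measure_Ioc, ENNReal.ofReal_pos, sub_pos] at h

end ProbabilityTheory

theorem StrictMonoOn.exists_continuous_invOn_Icc {φ : ℝ → ℝ} {a b : ℝ} (hab : a ≤ b)
    (hφ : StrictMonoOn φ (Icc a b)) (hφc : ContinuousOn φ (Icc a b)) :
    ∃ h : ℝ → ℝ, Continuous h ∧ StrictMonoOn h (Icc (φ a) (φ b)) ∧
      BijOn h (Icc (φ a) (φ b)) (Icc a b) ∧ InvOn h φ (Icc a b) (Icc (φ a) (φ b)) := by
  have hmaps : MapsTo φ (Icc a b) (Icc (φ a) (φ b)) := hφ.monotoneOn.mapsTo_Icc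
  have hsurj : SurjOn φ (Icc a b) (Icc (φ a) (φ b)) := intermediate_value_Icc hab hφc
  let e : Icc a b ≃o Icc (φ a) (φ b) := StrictMono.orderIsoOfSurjective hmaps.restrict
    (fun x y hxy => hφ x.2 y.2 hxy) (hmaps.restrict_surjective_iff.2 hsurj)
  have hφab : φ a ≤ φ b := hφ.monotoneOn ⟨le_rfl, hab⟩ ⟨hab, le_rfl⟩ hab
  set h := IccExtend hφab (Subtype.val ∘ e.symm)
  have h_apply : ∀ y (hy : y ∈ Icc (φ a) (φ b)), h y = e.symm ⟨y, hy⟩ :=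
    fun y hy => IccExtend_of_mem hφab _ hy
  have h_maps : MapsTo h (Icc (φ a) (φ b)) (Icc a b) := fun y hy => by
    rw [h_apply y hy]
    exact (e.symm _).2
  have h_inv : InvOn h φ (Icc a b) (Icc (φ a) (φ b)) := by
    refine ⟨fun x hx => ?_, fun y hy => ?_⟩
    · rw [h_apply _ (hmaps hx)]
      exact congrArg Subtype.val (e.symm_apply_apply ⟨x, hx⟩)
    · rw [h_apply y hy]
      exact congrArg Subtype.val (e.apply_symm_apply ⟨y, hy⟩)
  exact ⟨h, (continuous_subtype_val.comp e.symm.continuous).Icc_extend',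
    ((Subtype.strictMono_coe _).comp e.symm.strictMono).strictMonoOn_IccExtend hφab,
    h_inv.symm.bijOn h_maps hmaps, h_inv⟩

section CurveMeasure

variable {X : Type*} [TopologicalSpace X] [MeasurableSpace X]

noncomputable def curveMeasure (ρ : Measure X) (γ : ℝ → X) (a b : ℝ) : Measure ℝ :=
  (ρ (γ '' Icc a b))⁻¹ • ρ.comapOn γ (Icc a b)

variable {ρ : Measure X} {γ : ℝ → X} {a b : ℝ}

theorem measure_image_Icc_ne_top [IsFiniteMeasureOnCompacts ρ] (hcont : ContinuousOn γ (Icc a b)) :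
    ρ (γ '' Icc a b) ≠ ⊤ :=
  (isCompact_Icc.image_of_continuousOn hcont).measure_lt_top.ne

variable [T2Space X] [BorelSpace X]

theorem measure_image_eq_mul_volume_of_Icc [IsFiniteMeasureOnCompacts ρ] {c : ENNReal}
    (hcont : ContinuousOn γ (Icc a b)) (hinj : InjOn γ (Icc a b))
    (hIcc : ∀ m ∈ Icc a b, ρ (γ '' Icc a m) = c * ENNReal.ofReal (m - a))
    {E : Set ℝ} (hE : E ⊆ Icc a b) : ρ (γ '' E) = c * volume E := by
  have hemb := hcont.measurableEmbedding measurableSet_Icc hinj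
  have hcomap : ∀ A, ρ.comapOn γ (Icc a b) A = ρ (γ '' (A ∩ Icc a b)) :=
    Measure.comapOn_apply measurableSet_Icc hemb ρ
  have : IsFiniteMeasure (ρ.comapOn γ (Icc a b)) := ⟨by
    rw [hcomap, univ_inter]; exact (measure_image_Icc_ne_top hcont).lt_top⟩
  have hext : ρ.comapOn γ (Icc a b) = c • volume.restrict (Icc a b) := by
    refine Measure.ext_of_Iic _ _ fun m => ?_
    rw [hcomap, Measure.smul_apply, Measure.restrict_apply measurableSet_Iic, smul_eq_mul,
      Iic_inter_Icc]
    rcases lt_or_ge (min m b) a with hm | hm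
    · simp [Icc_eq_empty_of_lt hm]
    · rw [hIcc _ ⟨hm, min_le_right _ _⟩, Real.volume_Icc]
  rw [← inter_eq_left.2 hE, ← hcomap, hext, Measure.smul_apply,
    Measure.restrict_apply' measurableSet_Icc, smul_eq_mul]

theorem curveMeasure_apply (hcont : ContinuousOn γ (Icc a b)) (hinj : InjOn γ (Icc a b))
    (A : Set ℝ) : curveMeasure ρ γ a b A = (ρ (γ '' Icc a b))⁻¹ * ρ (γ '' (A ∩ Icc a b)) := by
  rw [curveMeasure, Measure.smul_apply, smul_eq_mul,
    Measure.comapOn_apply measurableSet_Icc (hcont.measurableEmbedding measurableSet_Icc hinj)]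

theorem isProbabilityMeasure_curveMeasure [IsFiniteMeasureOnCompacts ρ]
    (hcont : ContinuousOn γ (Icc a b)) (hinj : InjOn γ (Icc a b)) (h0 : ρ (γ '' Icc a b) ≠ 0) :
    IsProbabilityMeasure (curveMeasure ρ γ a b) :=
  ⟨by rw [curveMeasure_apply hcont hinj, univ_inter, ENNReal.inv_mul_cancel h0
    (measure_image_Icc_ne_top hcont)]⟩

theorem nullSingletonClass_curveMeasure [NullSingletonClass ρ]
    (hcont : ContinuousOn γ (Icc a b)) (hinj : InjOn γ (Icc a b)) :
    NullSingletonClass (curveMeasure ρ γ a b) :=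
  ⟨fun x => by
    rw [curveMeasure_apply hcont hinj, mul_eq_zero]
    exact .inr <| measure_mono_null ((image_mono inter_subset_left).trans image_singleton.subset)
      (measure_singleton _)⟩

theorem measure_image_Icc_eq_mul_cdf_curveMeasure [IsFiniteMeasureOnCompacts ρ]
    (hcont : ContinuousOn γ (Icc a b)) (hinj : InjOn γ (Icc a b)) (h0 : ρ (γ '' Icc a b) ≠ 0)
    {t : ℝ} (ht : t ≤ b) :
    ρ (γ '' Icc a t) = ρ (γ '' Icc a b) * ENNReal.ofReal (cdf (curveMeasure ρ γ a b) t) := by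
  have := isProbabilityMeasure_curveMeasure hcont hinj h0
  rw [ofReal_cdf, curveMeasure_apply hcont hinj, Iic_inter_Icc, min_eq_left ht,
    ENNReal.mul_inv_cancel_left h0 (measure_image_Icc_ne_top hcont)]

theorem cdf_curveMeasure_left [IsFiniteMeasureOnCompacts ρ] [NullSingletonClass ρ]
    (hcont : ContinuousOn γ (Icc a b)) (hinj : InjOn γ (Icc a b)) (h0 : ρ (γ '' Icc a b) ≠ 0)
    (hab : a ≤ b) : cdf (curveMeasure ρ γ a b) a = 0 := by
  have h := measure_image_Icc_eq_mul_cdf_curveMeasure hcont hinj h0 hab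
  rw [Icc_self, image_singleton, measure_singleton, eq_comm, mul_eq_zero, or_iff_right h0,
    ENNReal.ofReal_eq_zero] at h
  exact le_antisymm h (cdf_nonneg _ _)

theorem cdf_curveMeasure_right [IsFiniteMeasureOnCompacts ρ]
    (hcont : ContinuousOn γ (Icc a b)) (hinj : InjOn γ (Icc a b)) (h0 : ρ (γ '' Icc a b) ≠ 0) :
    cdf (curveMeasure ρ γ a b) b = 1 := by
  have := isProbabilityMeasure_curveMeasure hcont hinj h0
  rw [← ENNReal.ofReal_eq_one, ofReal_cdf, curveMeasure_apply hcont hinj, Iic_inter_Icc, min_self,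
    ENNReal.inv_mul_cancel h0 (measure_image_Icc_ne_top hcont)]

theorem strictMonoOn_cdf_curveMeasure [IsFiniteMeasureOnCompacts ρ] [NullSingletonClass ρ]
    (hcont : ContinuousOn γ (Icc a b)) (hinj : InjOn γ (Icc a b)) (h0 : ρ (γ '' Icc a b) ≠ 0)
    (hpos : ∀ s t, a ≤ s → s < t → t ≤ b → 0 < ρ (γ '' Icc s t)) :
    StrictMonoOn (cdf (curveMeasure ρ γ a b)) (Icc a b) := by
  have := isProbabilityMeasure_curveMeasure hcont hinj h0
  intro s hs t ht hst
  have hIoc : ρ (γ '' Ioc s t) = ρ (γ '' Icc s t) := by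
    rw [← Ioc_insert_left hst.le, image_insert_eq]
    exact (measure_congr (insert_ae_eq_self _ _)).symm
  refine cdf_lt_cdf ?_
  rw [curveMeasure_apply hcont hinj,
    inter_eq_left.2 (Ioc_subset_Icc_self.trans (Icc_subset_Icc hs.1 ht.2)), hIoc]
  exact ENNReal.mul_pos (ENNReal.inv_ne_zero.2 (measure_image_Icc_ne_top hcont))
    (hpos s t hs.1 hst ht.2).ne'

end CurveMeasure

theorem positive_curve_homogeneous_reparametrization_general
    (γ : ℝ → ℝ × ℝ) (β : ℝ)
    (hcont : ContinuousOn γ (Icc 0 1)) (hinj : InjOn γ (Icc 0 1))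
    (hpos : ∀ s t : ℝ, 0 ≤ s → s < t → t ≤ 1 → 0 < volume (γ '' Icc s t))
    (harea : volume (γ '' Icc 0 1) = ENNReal.ofReal β) :
    ∃ h : ℝ → ℝ,
      StrictMonoOn h (Icc 0 1) ∧
      ContinuousOn h (Icc 0 1) ∧
      h '' Icc 0 1 = Icc 0 1 ∧
      ∀ E : Set ℝ, E ⊆ Icc 0 1 → NullMeasurableSet E volume →
        volume ((γ ∘ h) '' E) = ENNReal.ofReal β * volume E := by
  have h0 : volume (γ '' Icc 0 1) ≠ 0 := (hpos 0 1 le_rfl zero_lt_one le_rfl).ne'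
  have := isProbabilityMeasure_curveMeasure hcont hinj h0
  have := nullSingletonClass_curveMeasure (ρ := volume) hcont hinj
  obtain ⟨h, h_cont, h_mono, h_bij, h_inv⟩ :=
    (strictMonoOn_cdf_curveMeasure hcont hinj h0 hpos).exists_continuous_invOn_Icc zero_le_one
      continuous_cdf.continuousOn
  have hφ0 := cdf_curveMeasure_left hcont hinj h0 zero_le_one
  rw [hφ0, cdf_curveMeasure_right hcont hinj h0] at h_mono h_bij h_inv
  have h_zero : h 0 = 0 := by simpa only [hφ0] using h_inv.1 (left_mem_Icc.2 zero_le_one)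
  refine ⟨h, h_mono, h_cont.continuousOn, h_bij.image_eq, fun E hE _ => ?_⟩
  refine measure_image_eq_mul_volume_of_Icc (hcont.comp h_cont.continuousOn h_bij.mapsTo)
    (hinj.comp h_mono.injOn h_bij.mapsTo) (fun m hm => ?_) hE
  rw [image_comp, h_cont.continuousOn.image_Icc_of_monotoneOn hm.1
      (h_mono.monotoneOn.mono (Icc_subset_Icc_right hm.2)), h_zero,
    measure_image_Icc_eq_mul_cdf_curveMeasure hcont hinj h0 (h_bij.mapsTo hm).2, h_inv.2 hm, harea,
    sub_zero]

/-- Any positive area-filling curve admits a reparametrization by an increasing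
homeomorphism of `[0,1]` which is homogeneously parametrized with factor `β`. -/
theorem positive_curve_homogeneous_reparametrization
    (γ : ℝ → ℝ × ℝ) (β : ℝ) (hβ : 0 < β)
    (hcont : ContinuousOn γ (Icc 0 1)) (hinj : InjOn γ (Icc 0 1))
    (hpos : ∀ s t : ℝ, 0 ≤ s → s < t → t ≤ 1 → 0 < volume (γ '' Icc s t))
    (harea : volume (γ '' Icc 0 1) = ENNReal.ofReal β) :
    ∃ h : ℝ → ℝ,
      StrictMonoOn h (Icc 0 1) ∧
      ContinuousOn h (Icc 0 1) ∧
      h '' Icc 0 1 = Icc 0 1 ∧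
      ∀ E : Set ℝ, E ⊆ Icc 0 1 → NullMeasurableSet E volume →
        volume ((γ ∘ h) '' E) = ENNReal.ofReal β * volume E :=
  positive_curve_homogeneous_reparametrization_general γ β hcont hinj hpos harea
end

section
/- Let γ : [0,1] → ℝ² be a continuous injective curve that is positive (i.e., λ₂(γ([s,t])) > 0 whenever 0 ≤ s < t ≤ 1) and satisfies λ₂(γ([0,1])) = β. Then the function F : [0,1] → ℝ defined by F(t) = λ₂(γ([0,t])) is a strictly increasing continuous function mapping [0,1] onto [0,β]; in particular F is a homeomorphism from [0,1] onto [0,β]. -/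
/-!
Since `γ` is injective, `γ([a,b])` and `γ([b,c])` meet only in the point `γ(b)`, which is
Lebesgue-null, so `F(t) = λ₂(γ([0,t]))` is additive: `F(t) - F(s) = λ₂(γ([s,t]))`. Positivity then
makes `F` strictly increasing, and continuity of `γ` makes `F` continuous, because `γ([s,t])` lies
in a small ball around `γ(t)` when `s` is close to `t`, and small balls have small area. The
intermediate value theorem finishes, as `F(0) = 0` and `F(1) = β`.
-/

open MeasureTheory Set Filter Topology Metric

section Additivity

variable {α X : Type*} [LinearOrder α] [TopologicalSpace α] [CompactIccSpace α]
  [TopologicalSpace X] [T2Space X] [MeasurableSpace X] [OpensMeasurableSpace X]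
  {μ : Measure X} [NullSingletonClass μ] {γ : α → X} {a b c : α}

theorem measure_image_Icc_add_measure_image_Icc (hγ : ContinuousOn γ (Icc a c))
    (hinj : InjOn γ (Icc a c)) (hab : a ≤ b) (hbc : b ≤ c) :
    μ (γ '' Icc a b) + μ (γ '' Icc b c) = μ (γ '' Icc a c) := by
  have hsub_left : Icc a b ⊆ Icc a c := Icc_subset_Icc_right hbc
  have hsub_right : Icc b c ⊆ Icc a c := Icc_subset_Icc_left hab
  have hinter : γ '' Icc a b ∩ γ '' Icc b c = {γ b} := by
    rw [← hinj.image_inter hsub_left hsub_right, Icc_inter_Icc_eq_singleton hab hbc,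
      image_singleton]
  have hmeas : MeasurableSet (γ '' Icc b c) :=
    (isCompact_Icc.image_of_continuousOn (hγ.mono hsub_right)).measurableSet
  rw [← measure_union_add_inter _ hmeas, hinter, measure_singleton, add_zero, ← image_union,
    Icc_union_Icc_eq_Icc hab hbc]

theorem toReal_measure_image_Icc_eq_add (hγ : ContinuousOn γ (Icc a b))
    (hinj : InjOn γ (Icc a b)) (hfin : μ (γ '' Icc a b) ≠ ⊤) {s t : α}
    (has : a ≤ s) (hst : s ≤ t) (htb : t ≤ b) :
    (μ (γ '' Icc a t)).toReal = (μ (γ '' Icc a s)).toReal + (μ (γ '' Icc s t)).toReal := by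
  have hsub : Icc a t ⊆ Icc a b := Icc_subset_Icc_right htb
  have hfin_t : μ (γ '' Icc a t) ≠ ⊤ := measure_ne_top_of_subset (image_mono hsub) hfin
  rw [← measure_image_Icc_add_measure_image_Icc (hγ.mono hsub) (hinj.mono hsub) has hst] at hfin_t ⊢
  exact ENNReal.toReal_add (ENNReal.add_ne_top.1 hfin_t).1 (ENNReal.add_ne_top.1 hfin_t).2

theorem strictMonoOn_toReal_measure_image_Icc (hγ : ContinuousOn γ (Icc a b))
    (hinj : InjOn γ (Icc a b)) (hfin : μ (γ '' Icc a b) ≠ ⊤)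
    (hpos : ∀ s t, a ≤ s → s < t → t ≤ b → 0 < μ (γ '' Icc s t)) :
    StrictMonoOn (fun t => (μ (γ '' Icc a t)).toReal) (Icc a b) := by
  intro s hs t ht hst
  have hfin_st : μ (γ '' Icc s t) ≠ ⊤ :=
    measure_ne_top_of_subset (image_mono (Icc_subset_Icc hs.1 ht.2)) hfin
  have hpos_st := ENNReal.toReal_pos (hpos s t hs.1 hst ht.2).ne' hfin_st
  simp only [toReal_measure_image_Icc_eq_add hγ hinj hfin hs.1 hst.le ht.2]
  linarith

theorem dist_toReal_measure_image_Icc (hγ : ContinuousOn γ (Icc a b))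
    (hinj : InjOn γ (Icc a b)) (hfin : μ (γ '' Icc a b) ≠ ⊤) {s t : α}
    (hs : s ∈ Icc a b) (ht : t ∈ Icc a b) :
    dist (μ (γ '' Icc a s)).toReal (μ (γ '' Icc a t)).toReal = (μ (γ '' uIcc s t)).toReal := by
  wlog hst : s ≤ t generalizing s t
  · rw [dist_comm, uIcc_comm]
    exact this ht hs (le_of_not_ge hst)
  rw [uIcc_of_le hst, toReal_measure_image_Icc_eq_add hγ hinj hfin hs.1 hst ht.2, Real.dist_eq,
    sub_add_cancel_left, abs_neg, abs_of_nonneg ENNReal.toReal_nonneg]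

end Additivity

section Continuity

variable {α X : Type*} [LinearOrder α] [TopologicalSpace α] [OrderTopology α]
  [MetricSpace X] [ProperSpace X] [MeasurableSpace X] [OpensMeasurableSpace X]
  {μ : Measure X} [IsFiniteMeasureOnCompacts μ] [NullSingletonClass μ] {γ : α → X} {a b : α}

theorem tendsto_measure_smallSets_nhds (y : X) :
    Tendsto (fun s => μ s) (𝓝 y).smallSets (𝓝 0) := by
  have hball : Tendsto (fun r => μ (closedBall y r)) (𝓝[>] 0) (𝓝 0) := by
    have h := tendsto_measure_cthickening_of_isCompact (μ := μ) (isCompact_singleton (x := y))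
    rw [measure_singleton] at h
    refine (h.mono_left nhdsWithin_le_nhds).congr' ?_
    filter_upwards [self_mem_nhdsWithin] with r hr
    rw [cthickening_singleton y (le_of_lt hr)]
  rw [ENNReal.tendsto_nhds_zero] at hball ⊢
  intro ε hε
  obtain ⟨r, hμr, hr⟩ := ((hball ε hε).and self_mem_nhdsWithin).exists
  exact (eventually_smallSets' fun s t hst ht => (measure_mono hst).trans ht).2
    ⟨closedBall y r, closedBall_mem_nhds y hr, hμr⟩

theorem tendsto_measure_image_uIcc (hγ : ContinuousOn γ (Icc a b)) {t : α}
    (ht : t ∈ Icc a b) :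
    Tendsto (fun s => μ (γ '' uIcc s t)) (𝓝[Icc a b] t) (𝓝 0) := by
  have hI : Tendsto (fun s => uIcc s t) (𝓝[Icc a b] t) (𝓝[Icc a b] t).smallSets :=
    tendsto_id.uIcc (tendsto_const_nhdsWithin ht)
  exact (tendsto_measure_smallSets_nhds (μ := μ) (γ t)).comp ((hγ t ht).tendsto.image_smallSets.comp hI)

theorem continuousOn_toReal_measure_image_Icc [CompactIccSpace α]
    (hγ : ContinuousOn γ (Icc a b)) (hinj : InjOn γ (Icc a b)) (hfin : μ (γ '' Icc a b) ≠ ⊤) :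
    ContinuousOn (fun t => (μ (γ '' Icc a t)).toReal) (Icc a b) := by
  intro t ht
  rw [ContinuousWithinAt, tendsto_iff_dist_tendsto_zero]
  have h := (ENNReal.tendsto_toReal ENNReal.zero_ne_top).comp (tendsto_measure_image_uIcc (μ := μ) hγ ht)
  rw [ENNReal.toReal_zero] at h
  refine h.congr' ?_
  filter_upwards [self_mem_nhdsWithin] with s hs
  exact (dist_toReal_measure_image_Icc hγ hinj hfin hs ht).symm

end Continuity

/-- For a positive continuous injective curve `γ` with `λ₂(γ([0,1])) = β`, the function
`F(t) = λ₂(γ([0,t]))` is a strictly increasing continuous map of `[0,1]` onto `[0,β]`. -/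
theorem area_function_homeomorphism
    (γ : ℝ → ℝ × ℝ) (β : ℝ)
    (hcont : ContinuousOn γ (Icc 0 1)) (hinj : InjOn γ (Icc 0 1))
    (hpos : ∀ s t : ℝ, 0 ≤ s → s < t → t ≤ 1 → 0 < volume (γ '' Icc s t))
    (harea : volume (γ '' Icc 0 1) = ENNReal.ofReal β) :
    StrictMonoOn (fun t : ℝ => (volume (γ '' Icc 0 t)).toReal) (Icc 0 1) ∧
    ContinuousOn (fun t : ℝ => (volume (γ '' Icc 0 t)).toReal) (Icc 0 1) ∧
    (fun t : ℝ => (volume (γ '' Icc 0 t)).toReal) '' Icc 0 1 = Icc 0 β := by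
  have hfin : volume (γ '' Icc 0 1) ≠ ⊤ := harea ▸ ENNReal.ofReal_ne_top
  have hmono := strictMonoOn_toReal_measure_image_Icc hcont hinj hfin hpos
  have hF := continuousOn_toReal_measure_image_Icc hcont hinj hfin
  have hβ : 0 < β := ENNReal.ofReal_pos.1 (harea ▸ hpos 0 1 le_rfl one_pos le_rfl)
  refine ⟨hmono, hF, ?_⟩
  rw [hF.image_Icc_of_monotoneOn zero_le_one hmono.monotoneOn]
  simp [harea, hβ.le]
end

section
/- There is no map f : [0,1] → [0,1]² that is simultaneously continuous, injective and surjective; i.e., no continuous surjection of [0,1] onto the unit square is injective (Netto's theorem). -/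
open MeasureTheory Set

/-- Netto's theorem: there is no continuous bijection of `[0,1]` onto the unit square. -/
theorem netto_no_continuous_injective_surjection :
    ¬ ∃ f : ℝ → ℝ × ℝ,
        ContinuousOn f (Icc 0 1) ∧
        InjOn f (Icc 0 1) ∧
        f '' Icc 0 1 = Icc (0 : ℝ) 1 ×ˢ Icc (0 : ℝ) 1 := by
  rintro ⟨f, hc, hi, hs⟩
  set K : Set ℝ := Icc 0 1 with hK
  set Q : Set (ℝ × ℝ) := Icc (0 : ℝ) 1 ×ˢ Icc (0 : ℝ) 1 with hQ
  -- preimages of the two corners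
  obtain ⟨t0, ht0K, ht0⟩ : ∃ t0 ∈ K, f t0 = ((0 : ℝ), (0 : ℝ)) := by
    have : ((0 : ℝ), (0 : ℝ)) ∈ f '' K := by
      rw [hs]; exact ⟨⟨le_refl 0, zero_le_one⟩, ⟨le_refl 0, zero_le_one⟩⟩
    obtain ⟨t, htK, ht⟩ := this; exact ⟨t, htK, ht⟩
  obtain ⟨t1, ht1K, ht1⟩ : ∃ t1 ∈ K, f t1 = ((1 : ℝ), (1 : ℝ)) := by
    have : ((1 : ℝ), (1 : ℝ)) ∈ f '' K := by
      rw [hs]; exact ⟨⟨zero_le_one, le_refl 1⟩, ⟨zero_le_one, le_refl 1⟩⟩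
    obtain ⟨t, htK, ht⟩ := this; exact ⟨t, htK, ht⟩
  have ht01 : t0 ≠ t1 := by
    intro h; rw [h, ht1] at ht0; simpa using congrArg Prod.fst ht0
  -- the midpoint
  set t : ℝ := (t0 + t1) / 2 with htdef
  have htmem : t ∈ Icc (min t0 t1) (max t0 t1) := by
    constructor
    · rcases le_total t0 t1 with h | h
      · rw [min_eq_left h]; linarith
      · rw [min_eq_right h]; linarith
    · rcases le_total t0 t1 with h | h
      · rw [max_eq_right h]; linarith
      · rw [max_eq_left h]; linarith
  have htK : t ∈ K := by
    rcases le_total t0 t1 with h | h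
    · exact ⟨by linarith [ht0K.1, ht1K.1], by linarith [ht0K.2, ht1K.2]⟩
    · exact ⟨by linarith [ht0K.1, ht1K.1], by linarith [ht0K.2, ht1K.2]⟩
  have htne0 : t ≠ t0 := by
    intro h; apply ht01; have := h ▸ htdef; simp [htdef] at h ⊢; linarith [h]
  have htne1 : t ≠ t1 := by
    intro h; apply ht01; simp [htdef] at h ⊢; linarith [h]
  set p : ℝ × ℝ := f t with hp
  have hp0 : p ≠ ((0 : ℝ), (0 : ℝ)) := by
    rw [← ht0]; exact fun h => htne0 (hi htK ht0K h)
  have hp1 : p ≠ ((1 : ℝ), (1 : ℝ)) := by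
    rw [← ht1]; exact fun h => htne1 (hi htK ht1K h)
  -- the two L-shaped boundary paths
  set S1 : Set (ℝ × ℝ) := (Icc 0 1 ×ˢ {0}) ∪ ({1} ×ˢ Icc 0 1) with hS1
  set S2 : Set (ℝ × ℝ) := ({0} ×ˢ Icc 0 1) ∪ (Icc 0 1 ×ˢ {1}) with hS2
  have hS1conn : IsPreconnected S1 := by
    apply IsPreconnected.union ((1 : ℝ), (0 : ℝ))
    · constructor <;> norm_num
    · constructor <;> norm_num
    · exact isPreconnected_Icc.prod isPreconnected_singleton
    · exact isPreconnected_singleton.prod isPreconnected_Icc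
  have hS2conn : IsPreconnected S2 := by
    apply IsPreconnected.union ((0 : ℝ), (1 : ℝ))
    · constructor <;> norm_num
    · constructor <;> norm_num
    · exact isPreconnected_singleton.prod isPreconnected_Icc
    · exact isPreconnected_Icc.prod isPreconnected_singleton
  have hS1sub : S1 ⊆ Q := by
    rintro ⟨x, y⟩ (⟨hx, hy⟩ | ⟨hx, hy⟩)
    · simp only [mem_singleton_iff] at hy
      exact ⟨hx, by norm_num [hy]⟩
    · simp only [mem_singleton_iff] at hx
      exact ⟨by norm_num [hx], hy⟩
  have hS2sub : S2 ⊆ Q := by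
    rintro ⟨x, y⟩ (⟨hx, hy⟩ | ⟨hx, hy⟩)
    · simp only [mem_singleton_iff] at hx
      exact ⟨by norm_num [hx], hy⟩
    · simp only [mem_singleton_iff] at hy
      exact ⟨hx, by norm_num [hy]⟩
  have h00S1 : ((0 : ℝ), (0 : ℝ)) ∈ S1 := Or.inl ⟨⟨le_refl 0, zero_le_one⟩, rfl⟩
  have h00S2 : ((0 : ℝ), (0 : ℝ)) ∈ S2 := Or.inl ⟨rfl, ⟨le_refl 0, zero_le_one⟩⟩
  have h11S1 : ((1 : ℝ), (1 : ℝ)) ∈ S1 := Or.inr ⟨rfl, ⟨zero_le_one, le_refl 1⟩⟩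
  have h11S2 : ((1 : ℝ), (1 : ℝ)) ∈ S2 := Or.inr ⟨⟨zero_le_one, le_refl 1⟩, rfl⟩
  -- p avoids one of the two paths
  have hpS : p ∉ S1 ∨ p ∉ S2 := by
    by_contra h
    push_neg at h
    obtain ⟨h1, h2⟩ := h
    obtain ⟨px, py⟩ := p
    rcases h1 with ⟨hx1, hy1⟩ | ⟨hx1, hy1⟩ <;> rcases h2 with ⟨hx2, hy2⟩ | ⟨hx2, hy2⟩ <;>
      simp only [mem_singleton_iff] at *
    · exact hp0 (by rw [hx2, hy1])
    · exact absurd (hy1 ▸ hy2) (by norm_num)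
    · exact absurd (hx1 ▸ hx2) (by norm_num)
    · exact hp1 (by rw [hx1, hy2])
  obtain ⟨S, hSconn, hSsub, h00, h11, hpnot⟩ :
      ∃ S : Set (ℝ × ℝ), IsPreconnected S ∧ S ⊆ Q ∧ ((0 : ℝ), (0 : ℝ)) ∈ S ∧
        ((1 : ℝ), (1 : ℝ)) ∈ S ∧ p ∉ S := by
    rcases hpS with h | h
    · exact ⟨S1, hS1conn, hS1sub, h00S1, h11S1, h⟩
    · exact ⟨S2, hS2conn, hS2sub, h00S2, h11S2, h⟩
  -- build the homeomorphism from K onto Q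
  haveI : CompactSpace K := isCompact_iff_compactSpace.mp isCompact_Icc
  have hGsurj : ∀ q : Q, ∃ x : K, f x.1 = q.1 := by
    rintro ⟨q, hq⟩
    have : q ∈ f '' K := by rw [hs]; exact hq
    obtain ⟨x, hxK, hx⟩ := this
    exact ⟨⟨x, hxK⟩, hx⟩
  have hGmem : ∀ x : K, f x.1 ∈ Q := fun x => by
    rw [← hs]; exact ⟨x.1, x.2, rfl⟩
  let G : K → Q := fun x => ⟨f x.1, hGmem x⟩
  have hGbij : Function.Bijective G := by
    constructor
    · intro a b hab
      exact Subtype.ext (hi a.2 b.2 (congrArg Subtype.val hab))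
    · intro q
      obtain ⟨x, hx⟩ := hGsurj q
      exact ⟨x, Subtype.ext hx⟩
  let e : K ≃ Q := Equiv.ofBijective G hGbij
  have hGcont : Continuous G := Continuous.subtype_mk hc.restrict _
  have hecont : Continuous e := hGcont
  let h : K ≃ₜ Q := Continuous.homeoOfEquivCompactToT2 hecont
  -- transport S back to the interval
  let S' : Set Q := {q : Q | q.1 ∈ S}
  let T : Set ℝ := Subtype.val '' (h.symm '' S')
  have hS'conn : IsPreconnected S' := by
    have himg : Subtype.val '' S' = S := by
      ext x
      constructor
      · rintro ⟨q, hq, rfl⟩; exact hq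
      · intro hx; exact ⟨⟨x, hSsub hx⟩, hx, rfl⟩
    have := Topology.IsInducing.subtypeVal (t := Q) |>.isPreconnected_image (s := S')
    rw [himg] at this
    exact this.mp hSconn
  have hTconn : IsPreconnected T :=
    ((hS'conn.image _ h.symm.continuous.continuousOn).image _ continuous_subtype_val.continuousOn)
  have hmemT : ∀ s : ℝ, ∀ hsK : s ∈ K, f s ∈ S → s ∈ T := by
    intro s hsK hfs
    refine ⟨h.symm ⟨f s, hGmem ⟨s, hsK⟩⟩, ⟨⟨f s, hGmem ⟨s, hsK⟩⟩, hfs, rfl⟩, ?_⟩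
    have : h.symm (h ⟨s, hsK⟩) = ⟨s, hsK⟩ := h.symm_apply_apply _
    have heq : h ⟨s, hsK⟩ = ⟨f s, hGmem ⟨s, hsK⟩⟩ := rfl
    rw [← heq, this]
  have ht0T : t0 ∈ T := hmemT t0 ht0K (ht0 ▸ h00)
  have ht1T : t1 ∈ T := hmemT t1 ht1K (ht1 ▸ h11)
  have htT : t ∉ T := by
    rintro ⟨a, ⟨q, hqS', rfl⟩, hval⟩
    apply hpnot
    have haK : (h.symm q : ℝ) ∈ K := (h.symm q).2
    have : h (h.symm q) = q := h.apply_symm_apply q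
    have hrfl : (↑(h (h.symm q)) : ℝ × ℝ) = f ↑(h.symm q) := rfl
    rw [this] at hrfl
    rw [hval] at hrfl
    have hq1 : (q : ℝ × ℝ) = f t := hrfl
    rw [hp, ← hq1]
    exact hqS'
  -- t lies in T by order-connectedness: contradiction
  have : t ∈ T := by
    rcases le_total t0 t1 with hle | hle
    · exact hTconn.Icc_subset ht0T ht1T ⟨by rw [min_eq_left hle] at htmem; exact htmem.1,
        by rw [max_eq_right hle] at htmem; exact htmem.2⟩
    · exact hTconn.Icc_subset ht1T ht0T ⟨by rw [min_eq_right hle] at htmem; exact htmem.1,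
        by rw [max_eq_left hle] at htmem; exact htmem.2⟩
  exact htT this
end

section
/- For every β ∈ (0,1) there exist a compact, totally disconnected set C ⊆ [0,1] with λ₁(C) = β, a compact set B ⊆ [0,1]² with λ₂(B) = β, and a homeomorphism φ : C → B such that λ₂(φ(E)) = λ₁(E) for every Borel set E ⊆ C (a measure-preserving homeomorphism from C onto B). -/
/-!
A digit sequence `x : ℕ → Bool` is sent to `f x = ∑ₙ xₙ (ℓₙ - ℓₙ₊₁)`, where `ℓ > 0`, `2 ℓₙ₊₁ < ℓₙ`
and `2ⁿ ℓₙ → m`. This is a homeomorphism of Cantor space onto the symmetric Cantor set obtained from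
`[0, ℓ₀]` by keeping, inside each of the `2ⁿ` intervals of length `ℓₙ` of stage `n`, the two end
intervals of length `ℓₙ₊₁`. The open gaps removed have total length `∑ 2ⁿ (ℓₙ - 2 ℓₙ₊₁) = ℓ₀ - m`,
so the Cantor set has measure `m`; by self-similarity, `f` maps each cylinder of length `n` onto a
translate of a Cantor set of measure `m / 2ⁿ`.

With `m = β` this gives `C`. Feeding the even and the odd digits separately into the construction
with `m = √β` gives a homeomorphism `g` onto `B = C' × C'`, mapping a cylinder of length `n` onto a
set of measure `(√β / 2^⌈n/2⌉) (√β / 2^⌊n/2⌋) = β / 2ⁿ`. Cylinders form a π-system generating the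
Borel sets of Cantor space, so `f` and `g` pull Lebesgue measure back to the same measure, and
`φ = g ∘ f⁻¹` is measure preserving.
-/

open Function MeasureTheory Set Filter Topology
open scoped ENNReal

lemma Antitone.hasSum_sub_succ {f : ℕ → ℝ} {l : ℝ} (hf : Antitone f)
    (hl : Tendsto f atTop (𝓝 l)) : HasSum (fun n => f n - f (n + 1)) (f 0 - l) := by
  rw [hasSum_iff_tendsto_nat_of_nonneg (fun n => sub_nonneg.2 (hf n.le_succ))]
  simp only [Finset.sum_range_sub']
  exact tendsto_const_nhds.sub hl

lemma two_pow_mul_ofReal (n : ℕ) (a : ℝ) :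
    (2 : ℝ≥0∞) ^ n * ENNReal.ofReal a = ENNReal.ofReal (2 ^ n * a) := by
  rw [ENNReal.ofReal_mul (by positivity), ENNReal.ofReal_pow zero_le_two, ENNReal.ofReal_ofNat]

lemma PiNat.isPiSystem_cylinders {E : ℕ → Type*} :
    IsPiSystem {s : Set (∀ n, E n) | ∃ x n, s = PiNat.cylinder x n} := by
  rintro - ⟨x, n, rfl⟩ - ⟨y, p, rfl⟩ ⟨z, hzx, hzy⟩
  rw [← PiNat.mem_cylinder_iff_eq.1 hzx, ← PiNat.mem_cylinder_iff_eq.1 hzy]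
  rcases le_total n p with hnp | hpn
  · exact ⟨z, p, inter_eq_right.2 (PiNat.cylinder_anti z hnp)⟩
  · exact ⟨z, n, inter_eq_left.2 (PiNat.cylinder_anti z hpn)⟩

lemma MeasureTheory.Measure.ext_of_cylinder {α : Type*} [TopologicalSpace α] [DiscreteTopology α]
    [Countable α] [Nonempty α] [MeasurableSpace α] [BorelSpace α] {μ ν : Measure (ℕ → α)}
    [IsFiniteMeasure μ]
    (h : ∀ x n, μ (PiNat.cylinder x n) = ν (PiNat.cylinder x n)) : μ = ν := by
  refine ext_of_generate_finite _ (BorelSpace.measurable_eq.trans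
    (borel_eq_generateFrom_of_subbasis (PiNat.isTopologicalBasis_cylinders _).eq_generateFrom))
    PiNat.isPiSystem_cylinders (by rintro - ⟨x, n, rfl⟩; exact h x n) ?_
  obtain ⟨x⟩ : Nonempty (ℕ → α) := inferInstance
  simpa only [PiNat.cylinder_zero] using h x 0

section Transfer

variable {X Y Z : Type*} [Nonempty X] {f : X → Y}

lemma image_comp_invFun_image (hf : f.Injective) (g : X → Z) (s : Set X) :
    (g ∘ invFun f) '' (f '' s) = g '' s := by
  rw [image_comp, (leftInverse_invFun hf).image_image]

lemma injOn_comp_invFun_range (hf : f.Injective) {g : X → Z} (hg : g.Injective) :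
    InjOn (g ∘ invFun f) (range f) := by
  rintro - ⟨x, rfl⟩ - ⟨y, rfl⟩ hxy
  simp only [comp_apply, leftInverse_invFun hf _] at hxy
  rw [hg hxy]

lemma Topology.IsEmbedding.continuousOn_invFun [TopologicalSpace X] [TopologicalSpace Y]
    (hf : IsEmbedding f) : ContinuousOn (invFun f) (range f) :=
  hf.isInducing.continuousOn_iff.2 <| continuousOn_id.congr fun _ hy => invFun_eq hy

lemma MeasurableEmbedding.measure_image_comp_invFun [MeasurableSpace X] [MeasurableSpace Y]
    [MeasurableSpace Z] {g : X → Z} {μ : Measure Y} {ν : Measure Z} (hf : MeasurableEmbedding f)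
    (hg : MeasurableEmbedding g) (hfg : μ.comap f = ν.comap g) {E : Set Y} (hE : E ⊆ range f) :
    ν ((g ∘ invFun f) '' E) = μ E := by
  rw [← image_preimage_eq_of_subset hE, image_comp_invFun_image hf.injective, ← hg.comap_apply,
    ← hfg, hf.comap_apply]

end Transfer

def evenOddEquiv (α : Type*) : (ℕ → α) ≃ (ℕ → α) × (ℕ → α) :=
  (Equiv.arrowCongr Equiv.natSumNatEquivNat (Equiv.refl α)).symm.trans
    (Equiv.sumArrowEquivProdArrow ℕ ℕ α)

lemma evenOddEquiv_apply {α : Type*} (x : ℕ → α) :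
    evenOddEquiv α x = (fun k => x (2 * k), fun k => x (2 * k + 1)) :=
  rfl

lemma continuous_evenOddEquiv {α : Type*} [TopologicalSpace α] : Continuous (evenOddEquiv α) := by
  simp only [funext evenOddEquiv_apply]
  fun_prop

lemma image_evenOddEquiv_cylinder {α : Type*} (x : ℕ → α) (n : ℕ) :
    evenOddEquiv α '' PiNat.cylinder x n =
      PiNat.cylinder (evenOddEquiv α x).1 ((n + 1) / 2) ×ˢ
        PiNat.cylinder (evenOddEquiv α x).2 (n / 2) := by
  ext ⟨u, v⟩
  constructor
  · rintro ⟨y, hy, hyuv⟩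
    simp only [evenOddEquiv_apply, Prod.mk.injEq] at hyuv
    obtain ⟨rfl, rfl⟩ := hyuv
    exact ⟨fun k hk => hy (2 * k) (by omega), fun k hk => hy (2 * k + 1) (by omega)⟩
  · rintro ⟨hu, hv⟩
    obtain ⟨y, hy⟩ := (evenOddEquiv α).surjective (u, v)
    simp only [evenOddEquiv_apply, Prod.mk.injEq] at hy
    obtain ⟨rfl, rfl⟩ := hy
    refine ⟨y, fun i hi => ?_, by rw [evenOddEquiv_apply]⟩
    obtain ⟨k, rfl | rfl⟩ := Nat.even_or_odd' i
    · exact hu k (by omega)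
    · exact hv k (by omega)

structure IsCantorLengths (ℓ : ℕ → ℝ) (m : ℝ) : Prop where
  pos : ∀ n, 0 < ℓ n
  two_mul_lt : ∀ n, 2 * ℓ (n + 1) < ℓ n
  tendsto : Tendsto (fun n => 2 ^ n * ℓ n) atTop (𝓝 m)

def cantorDigit (ℓ : ℕ → ℝ) (x : ℕ → Bool) (n : ℕ) : ℝ := if x n then ℓ n - ℓ (n + 1) else 0

noncomputable def cantorMap (ℓ : ℕ → ℝ) (x : ℕ → Bool) : ℝ := ∑' n, cantorDigit ℓ x n

def partialSum (ℓ : ℕ → ℝ) (x : ℕ → Bool) (n : ℕ) : ℝ := ∑ i ∈ Finset.range n, cantorDigit ℓ x i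

/-- The left endpoints of the `2ⁿ` intervals of stage `n`. -/
noncomputable def levelPoints (ℓ : ℕ → ℝ) (n : ℕ) : Finset ℝ :=
  Finset.univ.image fun s : Fin n → Bool => ∑ i, if s i then ℓ i - ℓ (i + 1) else 0

def gapSet (ℓ : ℕ → ℝ) : Set ℝ :=
  ⋃ n, ⋃ p ∈ levelPoints ℓ n, Ioo (p + ℓ (n + 1)) (p + (ℓ n - ℓ (n + 1)))

noncomputable def planeMap (ℓ : ℕ → ℝ) : (ℕ → Bool) → ℝ × ℝ :=
  Prod.map (cantorMap ℓ) (cantorMap ℓ) ∘ evenOddEquiv Bool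

lemma partialSum_succ (ℓ : ℕ → ℝ) (x : ℕ → Bool) (n : ℕ) :
    partialSum ℓ x (n + 1) = partialSum ℓ x n + cantorDigit ℓ x n :=
  Finset.sum_range_succ _ n

lemma partialSum_eq_of_mem_cylinder (ℓ : ℕ → ℝ) {x y : ℕ → Bool} {n : ℕ}
    (hy : y ∈ PiNat.cylinder x n) : partialSum ℓ y n = partialSum ℓ x n :=
  Finset.sum_congr rfl fun i hi => by
    simp only [cantorDigit, hy i (Finset.mem_range.1 hi)]

lemma partialSum_update_succ (ℓ : ℕ → ℝ) (x : ℕ → Bool) (n : ℕ) (b : Bool) :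
    partialSum ℓ (update x n b) (n + 1) =
      partialSum ℓ x n + if b then ℓ n - ℓ (n + 1) else 0 := by
  rw [partialSum_succ, partialSum_eq_of_mem_cylinder ℓ (PiNat.update_mem_cylinder x n b),
    cantorDigit, update_self]

lemma partialSum_mem_levelPoints (ℓ : ℕ → ℝ) (x : ℕ → Bool) (n : ℕ) :
    partialSum ℓ x n ∈ levelPoints ℓ n :=
  Finset.mem_image.2
    ⟨fun i => x i, Finset.mem_univ _, Fin.sum_univ_eq_sum_range (cantorDigit ℓ x) n⟩

lemma measure_biUnion_levelPoints_le (μ : Measure ℝ) (ℓ : ℕ → ℝ) (n : ℕ) (A : ℝ → Set ℝ)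
    {c : ℝ≥0∞} (hA : ∀ p, μ (A p) ≤ c) : μ (⋃ p ∈ levelPoints ℓ n, A p) ≤ 2 ^ n * c := by
  have hcard : (levelPoints ℓ n).card ≤ 2 ^ n :=
    Finset.card_image_le.trans (by simp)
  calc μ (⋃ p ∈ levelPoints ℓ n, A p) ≤ (levelPoints ℓ n).card • c :=
        (measure_biUnion_finset_le _ _).trans (Finset.sum_le_card_nsmul _ _ _ fun p _ => hA p)
    _ ≤ 2 ^ n * c := by
        rw [nsmul_eq_mul]
        gcongr
        exact_mod_cast hcard

lemma exists_mem_Icc_partialSum_of_notMem_gapSet (ℓ : ℕ → ℝ) {t : ℝ}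
    (ht : t ∈ Icc 0 (ℓ 0)) (hG : t ∉ gapSet ℓ) (n : ℕ) :
    ∃ x, t ∈ Icc (partialSum ℓ x n) (partialSum ℓ x n + ℓ n) := by
  induction n with
  | zero => exact ⟨fun _ => false, by simpa [partialSum] using ht⟩
  | succ n ih =>
    obtain ⟨x, hx₁, hx₂⟩ := ih
    have hgap : t ∉ Ioo (partialSum ℓ x n + ℓ (n + 1)) (partialSum ℓ x n + (ℓ n - ℓ (n + 1))) :=
      fun hmem => hG (mem_iUnion.2 ⟨n, mem_biUnion (partialSum_mem_levelPoints ℓ x n) hmem⟩)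
    rw [mem_Ioo, not_and_or, not_lt, not_lt] at hgap
    by_cases hleft : t ≤ partialSum ℓ x n + ℓ (n + 1)
    · refine ⟨update x n false, ?_⟩
      rw [partialSum_update_succ, if_neg Bool.false_ne_true, add_zero]
      exact ⟨hx₁, hleft⟩
    · refine ⟨update x n true, ?_⟩
      rw [partialSum_update_succ, if_pos rfl]
      exact ⟨hgap.resolve_left hleft, by linarith⟩

lemma range_planeMap (ℓ : ℕ → ℝ) :
    range (planeMap ℓ) = range (cantorMap ℓ) ×ˢ range (cantorMap ℓ) := by
  rw [planeMap, EquivLike.range_comp, range_prodMap]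

namespace IsCantorLengths

variable {ℓ : ℕ → ℝ} {m : ℝ} (h : IsCantorLengths ℓ m)
include h

lemma lt_sub (n : ℕ) : ℓ (n + 1) < ℓ n - ℓ (n + 1) := by linarith [h.two_mul_lt n]

lemma antitone : Antitone ℓ :=
  antitone_nat_of_succ_le fun n => by linarith [h.two_mul_lt n, h.pos (n + 1)]

lemma antitone_two_pow_mul : Antitone fun n => 2 ^ n * ℓ n :=
  antitone_nat_of_succ_le fun n => by
    rw [pow_succ, mul_assoc]
    exact mul_le_mul_of_nonneg_left (h.two_mul_lt n).le (by positivity)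

lemma nonneg : 0 ≤ m :=
  ge_of_tendsto' h.tendsto fun n => by have := h.pos n; positivity

lemma le_apply_zero : m ≤ ℓ 0 :=
  le_of_tendsto' h.tendsto fun n => by simpa using h.antitone_two_pow_mul n.zero_le

lemma tendsto_zero : Tendsto ℓ atTop (𝓝 0) := by
  have := h.tendsto.mul (tendsto_pow_atTop_nhds_zero_of_lt_one (by norm_num : (0 : ℝ) ≤ 1 / 2)
    (by norm_num))
  rw [mul_zero] at this
  refine this.congr fun n => ?_
  rw [mul_comm, ← mul_assoc, ← mul_pow]
  norm_num

lemma shift (n : ℕ) : IsCantorLengths (fun k => ℓ (k + n)) (m / 2 ^ n) where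
  pos k := h.pos (k + n)
  two_mul_lt k := by simpa only [Nat.add_right_comm] using h.two_mul_lt (k + n)
  tendsto := by
    refine ((h.tendsto.comp (tendsto_add_atTop_nat n)).div_const (2 ^ n)).congr fun k => ?_
    simp only [comp_apply, pow_add]
    field_simp

lemma hasSum_sub_succ : HasSum (fun n => ℓ n - ℓ (n + 1)) (ℓ 0) := by
  simpa using h.antitone.hasSum_sub_succ h.tendsto_zero

lemma cantorDigit_nonneg (x : ℕ → Bool) (n : ℕ) : 0 ≤ cantorDigit ℓ x n := by
  unfold cantorDigit; split_ifs <;> linarith [h.lt_sub n, h.pos (n + 1)]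

lemma cantorDigit_le (x : ℕ → Bool) (n : ℕ) : cantorDigit ℓ x n ≤ ℓ n - ℓ (n + 1) := by
  unfold cantorDigit; split_ifs <;> linarith [h.lt_sub n, h.pos (n + 1)]

lemma summable_cantorDigit (x : ℕ → Bool) : Summable (cantorDigit ℓ x) :=
  .of_nonneg_of_le (h.cantorDigit_nonneg x) (h.cantorDigit_le x) h.hasSum_sub_succ.summable

lemma cantorMap_mem_Icc (x : ℕ → Bool) : cantorMap ℓ x ∈ Icc 0 (ℓ 0) :=
  ⟨tsum_nonneg (h.cantorDigit_nonneg x), h.hasSum_sub_succ.tsum_eq ▸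
    (h.summable_cantorDigit x).tsum_le_tsum (h.cantorDigit_le x) h.hasSum_sub_succ.summable⟩

lemma cantorMap_eq_partialSum_add (x : ℕ → Bool) (n : ℕ) :
    cantorMap ℓ x = partialSum ℓ x n + cantorMap (fun k => ℓ (k + n)) (fun k => x (k + n)) := by
  rw [cantorMap, ← (h.summable_cantorDigit x).sum_add_tsum_nat_add n]
  simp only [partialSum, cantorMap, cantorDigit, Nat.add_right_comm]

lemma cantorMap_mem_Icc_partialSum (x : ℕ → Bool) (n : ℕ) :
    cantorMap ℓ x ∈ Icc (partialSum ℓ x n) (partialSum ℓ x n + ℓ n) := by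
  have := (h.shift n).cantorMap_mem_Icc (fun k => x (k + n))
  rw [h.cantorMap_eq_partialSum_add x n]
  simp only [zero_add, mem_Icc] at this ⊢
  constructor <;> linarith

lemma cantorMap_le_of_false {x : ℕ → Bool} {n : ℕ} (hx : x n = false) :
    cantorMap ℓ x ≤ partialSum ℓ x n + ℓ (n + 1) := by
  simpa [partialSum_succ, cantorDigit, hx] using (h.cantorMap_mem_Icc_partialSum x (n + 1)).2

lemma le_cantorMap_of_true {x : ℕ → Bool} {n : ℕ} (hx : x n = true) :
    partialSum ℓ x n + (ℓ n - ℓ (n + 1)) ≤ cantorMap ℓ x := by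
  simpa [partialSum_succ, cantorDigit, hx] using (h.cantorMap_mem_Icc_partialSum x (n + 1)).1

lemma cantorMap_lt_of_mem_cylinder {x y : ℕ → Bool} {n : ℕ} (hy : y ∈ PiNat.cylinder x n)
    (hx : x n = false) (hyn : y n = true) : cantorMap ℓ x < cantorMap ℓ y := by
  have := h.le_cantorMap_of_true hyn
  rw [partialSum_eq_of_mem_cylinder ℓ hy] at this
  linarith [h.cantorMap_le_of_false hx, h.lt_sub n]

lemma cantorMap_injective : Injective (cantorMap ℓ) := by
  intro x y hxy
  by_contra hne
  set n := PiNat.firstDiff x y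
  have hyx : y ∈ PiNat.cylinder x n := by
    simpa only [n, PiNat.firstDiff_comm] using PiNat.mem_cylinder_firstDiff y x
  have hdiff := PiNat.apply_firstDiff_ne hne
  cases hx : x n <;> cases hy : y n <;> simp only [n, hx, hy, ne_eq, not_true_eq_false] at hdiff
  · exact (h.cantorMap_lt_of_mem_cylinder hyx hx hy).ne hxy
  · exact (h.cantorMap_lt_of_mem_cylinder (PiNat.mem_cylinder_firstDiff x y) hy hx).ne' hxy

lemma continuous_cantorMap : Continuous (cantorMap ℓ) := by
  refine continuous_tsum (fun n => ?_) h.hasSum_sub_succ.summable fun n x => ?_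
  · exact (continuous_of_discreteTopology
      (f := fun b : Bool => if b then ℓ n - ℓ (n + 1) else 0)).comp (continuous_apply n)
  · rw [Real.norm_of_nonneg (h.cantorDigit_nonneg x n)]
    exact h.cantorDigit_le x n

lemma isClosedEmbedding_cantorMap : IsClosedEmbedding (cantorMap ℓ) :=
  h.continuous_cantorMap.isClosedEmbedding h.cantorMap_injective

lemma isTotallyDisconnected_range_cantorMap : IsTotallyDisconnected (range (cantorMap ℓ)) :=
  h.isClosedEmbedding_cantorMap.isEmbedding.isTotallyDisconnected_range.2 inferInstance

lemma volume_range_cantorMap_le : volume (range (cantorMap ℓ)) ≤ ENNReal.ofReal m := by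
  refine ge_of_tendsto' (ENNReal.tendsto_ofReal h.tendsto) fun n => ?_
  have hcover : range (cantorMap ℓ) ⊆ ⋃ p ∈ levelPoints ℓ n, Icc p (p + ℓ n) := by
    rintro - ⟨x, rfl⟩
    exact mem_biUnion (partialSum_mem_levelPoints ℓ x n) (h.cantorMap_mem_Icc_partialSum x n)
  refine (measure_mono hcover).trans ?_
  rw [← two_pow_mul_ofReal]
  exact measure_biUnion_levelPoints_le _ ℓ n _ fun p => by simp

lemma volume_gapSet_le : volume (gapSet ℓ) ≤ ENNReal.ofReal (ℓ 0 - m) := by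
  have hsum := h.antitone_two_pow_mul.hasSum_sub_succ h.tendsto
  have hnonneg (n : ℕ) : 0 ≤ 2 ^ n * ℓ n - 2 ^ (n + 1) * ℓ (n + 1) :=
    sub_nonneg.2 (h.antitone_two_pow_mul n.le_succ)
  calc volume (gapSet ℓ)
      ≤ ∑' n, (2 : ℝ≥0∞) ^ n * ENNReal.ofReal (ℓ n - ℓ (n + 1) - ℓ (n + 1)) := by
        refine (measure_iUnion_le _).trans (ENNReal.tsum_le_tsum fun n => ?_)
        exact measure_biUnion_levelPoints_le _ ℓ n _ fun p => by
          rw [Real.volume_Ioo]; ring_nf; rfl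
    _ = ∑' n, ENNReal.ofReal (2 ^ n * ℓ n - 2 ^ (n + 1) * ℓ (n + 1)) := by
        congr 1; ext n; rw [two_pow_mul_ofReal]; ring_nf
    _ = ENNReal.ofReal (ℓ 0 - m) := by
        rw [← ENNReal.ofReal_tsum_of_nonneg hnonneg hsum.summable, hsum.tsum_eq]
        simp

lemma Icc_diff_range_cantorMap_subset_gapSet : Icc 0 (ℓ 0) \ range (cantorMap ℓ) ⊆ gapSet ℓ := by
  rintro t ⟨ht, htC⟩
  by_contra hG
  refine htC (h.isClosedEmbedding_cantorMap.isClosed_range.closure_subset ?_)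
  refine Metric.mem_closure_iff.2 fun ε hε => ?_
  obtain ⟨n, hn⟩ := (h.tendsto_zero.eventually (gt_mem_nhds hε)).exists
  obtain ⟨x, hx⟩ := exists_mem_Icc_partialSum_of_notMem_gapSet ℓ ht hG n
  have hcx := h.cantorMap_mem_Icc_partialSum x n
  refine ⟨cantorMap ℓ x, mem_range_self x, ?_⟩
  rw [Real.dist_eq, abs_lt]
  simp only [mem_Icc] at hx hcx
  constructor <;> linarith

lemma volume_range_cantorMap : volume (range (cantorMap ℓ)) = ENNReal.ofReal m := by
  refine le_antisymm h.volume_range_cantorMap_le ?_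
  have hcover : Icc 0 (ℓ 0) ⊆ range (cantorMap ℓ) ∪ gapSet ℓ := fun t ht =>
    (em _).imp id fun htC => h.Icc_diff_range_cantorMap_subset_gapSet ⟨ht, htC⟩
  have hle : ENNReal.ofReal m + ENNReal.ofReal (ℓ 0 - m) ≤
      volume (range (cantorMap ℓ)) + ENNReal.ofReal (ℓ 0 - m) :=
    calc ENNReal.ofReal m + ENNReal.ofReal (ℓ 0 - m) = volume (Icc 0 (ℓ 0)) := by
          rw [Real.volume_Icc, ← ENNReal.ofReal_add h.nonneg (sub_nonneg.2 h.le_apply_zero)]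
          ring_nf
      _ ≤ volume (range (cantorMap ℓ)) + volume (gapSet ℓ) :=
          (measure_mono hcover).trans (measure_union_le _ _)
      _ ≤ volume (range (cantorMap ℓ)) + ENNReal.ofReal (ℓ 0 - m) :=
          add_le_add le_rfl h.volume_gapSet_le
  exact (ENNReal.add_le_add_iff_right ENNReal.ofReal_ne_top).1 hle

lemma image_cylinder (x : ℕ → Bool) (n : ℕ) :
    cantorMap ℓ '' PiNat.cylinder x n =
      (partialSum ℓ x n + ·) '' range (cantorMap fun k => ℓ (k + n)) := by
  ext t
  constructor
  · rintro ⟨y, hy, rfl⟩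
    refine ⟨_, mem_range_self fun k => y (k + n), ?_⟩
    rw [h.cantorMap_eq_partialSum_add y n, partialSum_eq_of_mem_cylinder ℓ hy]
  · rintro ⟨-, ⟨z, rfl⟩, rfl⟩
    let y : ℕ → Bool := fun i => if i < n then x i else z (i - n)
    have hy : y ∈ PiNat.cylinder x n := fun i hi => if_pos hi
    have hshift : (fun k => y (k + n)) = z := funext fun k => by simp [y]
    refine ⟨y, hy, ?_⟩
    rw [h.cantorMap_eq_partialSum_add y n, partialSum_eq_of_mem_cylinder ℓ hy, hshift]

lemma volume_image_cylinder (x : ℕ → Bool) (n : ℕ) :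
    volume (cantorMap ℓ '' PiNat.cylinder x n) = ENNReal.ofReal (m / 2 ^ n) := by
  rw [h.image_cylinder, image_add_left, measure_preimage_add, (h.shift n).volume_range_cantorMap]

lemma isClosedEmbedding_planeMap : IsClosedEmbedding (planeMap ℓ) :=
  ((h.continuous_cantorMap.prodMap h.continuous_cantorMap).comp
    continuous_evenOddEquiv).isClosedEmbedding
    ((h.cantorMap_injective.prodMap h.cantorMap_injective).comp (evenOddEquiv Bool).injective)

lemma volume_image_planeMap_cylinder (x : ℕ → Bool) (n : ℕ) :
    volume (planeMap ℓ '' PiNat.cylinder x n) = ENNReal.ofReal (m * m / 2 ^ n) := by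
  rw [planeMap, image_comp, image_evenOddEquiv_cylinder, prodMap_image_prod,
    Measure.volume_eq_prod, Measure.prod_prod, h.volume_image_cylinder, h.volume_image_cylinder,
    ← ENNReal.ofReal_mul (div_nonneg h.nonneg (by positivity)), div_mul_div_comm, ← pow_add,
    show (n + 1) / 2 + n / 2 = n by omega]

end IsCantorLengths

lemma comap_cantorMap_eq_comap_planeMap {ℓ ℓ' : ℕ → ℝ} {m : ℝ} (hℓ : IsCantorLengths ℓ (m * m))
    (hℓ' : IsCantorLengths ℓ' m) :
    volume.comap (cantorMap ℓ) = volume.comap (planeMap ℓ') := by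
  have hf := hℓ.isClosedEmbedding_cantorMap.measurableEmbedding
  have hg := hℓ'.isClosedEmbedding_planeMap.measurableEmbedding
  have : IsFiniteMeasure (volume.comap (cantorMap ℓ)) :=
    ⟨by simp [hf.comap_apply, hℓ.volume_range_cantorMap]⟩
  refine Measure.ext_of_cylinder fun x n => ?_
  rw [hf.comap_apply, hg.comap_apply, hℓ.volume_image_cylinder,
    hℓ'.volume_image_planeMap_cylinder]

noncomputable def fatCantorLengths (β : ℝ) (n : ℕ) : ℝ := β / 2 ^ n + (1 - β) / 4 ^ n

lemma isCantorLengths_fatCantorLengths {β : ℝ} (h₀ : 0 ≤ β) (h₁ : β < 1) :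
    IsCantorLengths (fatCantorLengths β) β where
  pos n := by
    have : 0 < 1 - β := by linarith
    unfold fatCantorLengths; positivity
  two_mul_lt n := by
    have h2 : 2 * fatCantorLengths β (n + 1) = β / 2 ^ n + (1 - β) / 4 ^ n / 2 := by
      simp only [fatCantorLengths, pow_succ]; ring
    have : 0 < (1 - β) / 4 ^ n := div_pos (by linarith) (by positivity)
    rw [h2, fatCantorLengths]
    linarith
  tendsto := by
    have hlim := (tendsto_pow_atTop_nhds_zero_of_lt_one (by norm_num : (0 : ℝ) ≤ 1 / 2)
      (by norm_num)).const_mul (1 - β) |>.const_add β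
    rw [mul_zero, add_zero] at hlim
    refine hlim.congr fun n => ?_
    simp only [fatCantorLengths, one_div_pow,
      show (4 : ℝ) ^ n = 2 ^ n * 2 ^ n by rw [← mul_pow]; norm_num]
    field_simp

lemma range_cantorMap_fatCantorLengths_subset {β : ℝ} (h₀ : 0 ≤ β) (h₁ : β < 1) :
    range (cantorMap (fatCantorLengths β)) ⊆ Icc 0 1 := by
  rintro - ⟨x, rfl⟩
  simpa [fatCantorLengths] using (isCantorLengths_fatCantorLengths h₀ h₁).cantorMap_mem_Icc x

/-- For every `β ∈ (0,1)` there are a compact totally disconnected set `C ⊆ [0,1]` of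
measure `β`, a compact set `B ⊆ [0,1]²` of measure `β`, and a measure-preserving
homeomorphism `φ` from `C` onto `B`. -/
theorem exists_measure_preserving_homeomorphism_cantor :
    ∀ β : ℝ, β ∈ Ioo (0 : ℝ) 1 →
      ∃ (C : Set ℝ) (B : Set (ℝ × ℝ)) (φ : ℝ → ℝ × ℝ),
        C ⊆ Icc (0 : ℝ) 1 ∧
        IsCompact C ∧
        IsTotallyDisconnected C ∧
        volume C = ENNReal.ofReal β ∧
        B ⊆ Icc (0 : ℝ) 1 ×ˢ Icc (0 : ℝ) 1 ∧
        IsCompact B ∧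
        volume B = ENNReal.ofReal β ∧
        ContinuousOn φ C ∧
        InjOn φ C ∧
        φ '' C = B ∧
        ∀ E : Set ℝ, E ⊆ C → MeasurableSet E → volume (φ '' E) = volume E := by
  rintro β ⟨hβ₀, hβ₁⟩
  have hsq : √β * √β = β := Real.mul_self_sqrt hβ₀.le
  have hs₁ : √β < 1 := (Real.sqrt_lt' one_pos).2 (by rwa [one_pow])
  have hℓ := isCantorLengths_fatCantorLengths hβ₀.le hβ₁
  have hℓ' := isCantorLengths_fatCantorLengths (Real.sqrt_nonneg β) hs₁
  set f := cantorMap (fatCantorLengths β)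
  set g := planeMap (fatCantorLengths √β)
  have hf := hℓ.isClosedEmbedding_cantorMap
  have hg := hℓ'.isClosedEmbedding_planeMap
  have hcomap : volume.comap f = volume.comap g :=
    comap_cantorMap_eq_comap_planeMap (by rwa [hsq]) hℓ'
  have hC' := range_cantorMap_fatCantorLengths_subset (Real.sqrt_nonneg β) hs₁
  refine ⟨range f, range g, g ∘ invFun f,
    range_cantorMap_fatCantorLengths_subset hβ₀.le hβ₁, isCompact_range hf.continuous,
    hℓ.isTotallyDisconnected_range_cantorMap, hℓ.volume_range_cantorMap, ?_,
    isCompact_range hg.continuous, ?_,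
    hg.continuous.comp_continuousOn hf.isEmbedding.continuousOn_invFun,
    injOn_comp_invFun_range hf.injective hg.injective, ?_, fun E hE _ =>
      hf.measurableEmbedding.measure_image_comp_invFun hg.measurableEmbedding hcomap hE⟩
  · rw [range_planeMap]; exact prod_mono hC' hC'
  · rw [range_planeMap, Measure.volume_eq_prod, Measure.prod_prod, hℓ'.volume_range_cantorMap,
      ← ENNReal.ofReal_mul (Real.sqrt_nonneg β), hsq]
  · rw [← image_univ, image_comp_invFun_image hf.injective, image_univ]
end

section
/- For every β ∈ (0,1) there exists a continuous injective map γ : [0,1] → [0,1]² with γ(0) = (0,0), γ(1) = (1,1), and λ₂(γ([0,1])) = β. -/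
/-!
Let `T` be the isosceles right triangle with hypotenuse `[0, 1]` and apex `(1 + i) / 2`. For
`c ∈ (0, 1)` the similarities `leftSim c` and `rightSim c`, of ratio `c / √2`, map `T` onto two
disjoint copies standing on the ends of the hypotenuse, and `bridge c` is the horizontal segment
joining them. Replacing an arc from `0` to `1` in `T` by its two images joined by the bridge, with
parameter `μ k` at stage `k`, gives arcs that converge uniformly, since all ratios are below
`1 / √2`. The limit curve is injective: the copies meet the bridge only at its ends, so two
parameters with the same image are within `3⁻ⁿ` of each other for every `n`. Its image is the
intersection of the sets obtained by applying the same substitution to `T` itself, of areas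
`|T| * ∏ μ k ^ 2`; choosing the `μ k` with `∏ μ k ^ 2 = q` gives an arc of area `q / 4`.

Two such arcs, mapped affinely onto the two halves of the unit square cut by its antidiagonal (the
first one slightly compressed, so that they meet only at the corner `i`), concatenate into an arc
from `0` to `1 + i` of any prescribed area `β ∈ (0, 1)`.
-/

open MeasureTheory Set Filter Topology Complex Metric
open scoped ENNReal

@[fun_prop]
lemma Continuous.complex_mk {X : Type*} [TopologicalSpace X] {f g : X → ℝ}
    (hf : Continuous f) (hg : Continuous g) : Continuous fun x => (⟨f x, g x⟩ : ℂ) :=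
  equivRealProdCLM.symm.continuous.comp (hf.prodMk hg)

lemma Complex.volume_reProdIm (s t : Set ℝ) : volume (s ×ℂ t) = volume s * volume t := by
  rw [show s ×ℂ t = measurableEquivRealProd ⁻¹' (s ×ˢ t) from rfl,
    volume_preserving_equiv_real_prod.measure_preimage_equiv, Measure.volume_eq_prod,
    Measure.prod_prod]

lemma Complex.volume_setOf_im_eq (a : ℝ) : volume {z : ℂ | z.im = a} = 0 := by
  rw [show {z : ℂ | z.im = a} = univ ×ℂ {a} by ext; simp [mem_reProdIm], volume_reProdIm,
    Real.volume_singleton, mul_zero]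

lemma Complex.volume_image_of_affine {g : ℂ → ℂ} (a b c d e f : ℝ)
    (hre : ∀ z, (g z).re = a * z.re + b * z.im + e)
    (him : ∀ z, (g z).im = c * z.re + d * z.im + f) (S : Set ℂ) :
    volume (g '' S) = ENNReal.ofReal |a * d - b * c| * volume S := by
  set L := Matrix.toLin basisOneI basisOneI !![a, b; c, d]
  have hg : g = fun z => ⟨e, f⟩ + L z := by
    funext z
    apply Complex.ext <;>
      simp [L, hre, him, Matrix.toLin_apply, Matrix.mulVec, dotProduct, Fin.sum_univ_two] <;> ring
  rw [hg, ← image_image (fun w => (⟨e, f⟩ : ℂ) + w) L, image_add_left, measure_preimage_add,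
    Measure.addHaar_image_linearMap, LinearMap.det_toLin, Matrix.det_fin_two_of]

lemma Complex.volume_setOf_re_add_im_eq (a : ℝ) : volume {z : ℂ | z.re + z.im = a} = 0 := by
  have hshear := volume_image_of_affine (g := fun w => ⟨w.re, w.im - w.re⟩) 1 0 (-1) 1 0 0
    (fun _ => by simp) (fun _ => by simp; ring) {z : ℂ | z.im = a}
  rw [volume_setOf_im_eq, mul_zero] at hshear
  refine measure_mono_null (fun z (hz : z.re + z.im = a) => ?_) hshear
  exact ⟨⟨z.re, a⟩, rfl, by apply Complex.ext <;> simp; linarith⟩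

theorem Path.injective_trans {X : Type*} [TopologicalSpace X] {x y z : X} {p : Path x y}
    {q : Path y z} (hp : Function.Injective p) (hq : Function.Injective q)
    (hpq : range p ∩ range q ⊆ {y}) : Function.Injective (p.trans q) := by
  have hmixed : ∀ s t : unitInterval, (s : ℝ) ≤ 1 / 2 → ¬ (t : ℝ) ≤ 1 / 2 →
      (p.trans q) s ≠ (p.trans q) t := by
    intro s t hs ht h
    rw [Path.trans_apply, Path.trans_apply, dif_pos hs, dif_neg ht] at h
    have hy : p ⟨2 * s, _⟩ = y := hpq ⟨mem_range_self _, h ▸ mem_range_self (f := q) _⟩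
    have hs' := congrArg Subtype.val (hp (hy.trans p.target.symm))
    have ht' := congrArg Subtype.val (hq ((h.symm.trans hy).trans q.source.symm))
    simp only [Set.Icc.coe_one, Set.Icc.coe_zero] at hs' ht'
    exact ht (by linarith)
  intro s t h
  by_cases hs : (s : ℝ) ≤ 1 / 2 <;> by_cases ht : (t : ℝ) ≤ 1 / 2
  · rw [Path.trans_apply, Path.trans_apply, dif_pos hs, dif_pos ht] at h
    exact Subtype.ext (by simpa using congrArg Subtype.val (hp h))
  · exact (hmixed s t hs ht h).elim
  · exact (hmixed t s ht hs h.symm).elim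
  · rw [Path.trans_apply, Path.trans_apply, dif_neg hs, dif_neg ht] at h
    exact Subtype.ext (by simpa using congrArg Subtype.val (hq h))

lemma Path.injOn_extend {X : Type*} [TopologicalSpace X] {x y : X} (p : Path x y)
    (hp : Function.Injective p) : InjOn p.extend (Icc 0 1) := fun s hs t ht h => by
  rw [p.extend_apply hs, p.extend_apply ht] at h
  exact congrArg Subtype.val (hp h)

namespace LanceThomas

noncomputable section

def triangle : Set ℂ := {z | 0 ≤ z.im ∧ z.im ≤ z.re ∧ z.re + z.im ≤ 1}

lemma isCompact_triangle : IsCompact triangle := by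
  refine IsCompact.of_isClosed_subset (s := Icc 0 1 ×ℂ Icc 0 1)
    (isCompact_Icc.reProdIm isCompact_Icc) ?_ ?_
  · simp only [triangle, ofPred_and]
    exact (isClosed_le continuous_const continuous_im).inter
      ((isClosed_le continuous_im continuous_re).inter
        (isClosed_le (continuous_re.add continuous_im) continuous_const))
  · rintro z ⟨h1, h2, h3⟩
    exact ⟨⟨by linarith, by linarith⟩, ⟨h1, by linarith⟩⟩

-- In `ℂ` the distance is Euclidean, for which `leftSim c` and `rightSim c` are similarities.
def leftSim (c : ℝ) (z : ℂ) : ℂ := ⟨c / 2 * (z.re + z.im), c / 2 * (z.re - z.im)⟩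

def rightSim (c : ℝ) (z : ℂ) : ℂ := ⟨1 + c / 2 * (z.re - z.im - 1), c / 2 * (1 - z.re - z.im)⟩

def bridge (c u : ℝ) : ℂ := ⟨c / 2 + u * (1 - c), c / 2⟩

def pieces (c : ℝ) (S : Set ℂ) : Set ℂ :=
  leftSim c '' S ∪ bridge c '' Icc 0 1 ∪ rightSim c '' S

section Pieces

variable {c : ℝ}

lemma dist_leftSim (z w : ℂ) : dist (leftSim c z) (leftSim c w) = |c| / √2 * dist z w := by
  rw [dist_eq_re_im, dist_eq_re_im, ← Real.sqrt_sq_eq_abs, ← Real.sqrt_div' _ (by norm_num),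
    ← Real.sqrt_mul (by positivity)]
  congr 1
  simp only [leftSim]
  ring

lemma dist_rightSim (z w : ℂ) : dist (rightSim c z) (rightSim c w) = |c| / √2 * dist z w := by
  rw [dist_eq_re_im, dist_eq_re_im, ← Real.sqrt_sq_eq_abs, ← Real.sqrt_div' _ (by norm_num),
    ← Real.sqrt_mul (by positivity)]
  congr 1
  simp only [rightSim]
  ring

@[fun_prop]
lemma continuous_leftSim : Continuous (leftSim c) := by unfold leftSim; fun_prop

@[fun_prop]
lemma continuous_rightSim : Continuous (rightSim c) := by unfold rightSim; fun_prop

@[fun_prop]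
lemma continuous_bridge : Continuous (bridge c) := by unfold bridge; fun_prop

lemma leftSim_injective (hc : c ≠ 0) : Function.Injective (leftSim c) := fun z w h => by
  simpa [dist_leftSim, hc] using dist_eq_zero.2 h

lemma rightSim_injective (hc : c ≠ 0) : Function.Injective (rightSim c) := fun z w h => by
  simpa [dist_rightSim, hc] using dist_eq_zero.2 h

lemma bridge_injective (hc : c ≠ 1) : Function.Injective (bridge c) := fun u v h => by
  have h := congrArg re h
  simp only [bridge, add_right_inj] at h
  exact mul_right_cancel₀ (sub_ne_zero.2 (Ne.symm hc)) h

lemma leftSim_zero : leftSim c 0 = 0 := by apply Complex.ext <;> simp [leftSim]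

lemma leftSim_one : leftSim c 1 = bridge c 0 := by apply Complex.ext <;> simp [leftSim, bridge]

lemma bridge_one : bridge c 1 = rightSim c 0 := by
  apply Complex.ext <;> simp [rightSim, bridge]; ring

lemma rightSim_one : rightSim c 1 = 1 := by apply Complex.ext <;> simp [rightSim]

lemma volume_image_leftSim (S : Set ℂ) :
    volume (leftSim c '' S) = ENNReal.ofReal (c ^ 2 / 2) * volume S := by
  rw [volume_image_of_affine (c / 2) (c / 2) (c / 2) (-(c / 2)) 0 0
    (fun z => by simp [leftSim]; ring) (fun z => by simp [leftSim]; ring)]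
  congr 2
  rw [show c / 2 * -(c / 2) - c / 2 * (c / 2) = -(c ^ 2 / 2) by ring, abs_neg,
    abs_of_nonneg (by positivity)]

lemma volume_image_rightSim (S : Set ℂ) :
    volume (rightSim c '' S) = ENNReal.ofReal (c ^ 2 / 2) * volume S := by
  rw [volume_image_of_affine (c / 2) (-(c / 2)) (-(c / 2)) (-(c / 2)) (1 - c / 2) (c / 2)
    (fun z => by simp [rightSim]; ring) (fun z => by simp [rightSim]; ring)]
  congr 2
  rw [show c / 2 * -(c / 2) - -(c / 2) * -(c / 2) = -(c ^ 2 / 2) by ring, abs_neg,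
    abs_of_nonneg (by positivity)]

lemma pieces_mono : Monotone (pieces c) := fun _ _ h =>
  union_subset_union (union_subset_union_left _ (image_mono h)) (image_mono h)

lemma isCompact_pieces {S : Set ℂ} (hS : IsCompact S) : IsCompact (pieces c S) :=
  ((hS.image continuous_leftSim).union (isCompact_Icc.image continuous_bridge)).union
    (hS.image continuous_rightSim)

section UnitInterval

variable (hc : c ∈ Icc (0 : ℝ) 1)
include hc

lemma mapsTo_leftSim : MapsTo (leftSim c) triangle triangle := by
  rintro z ⟨h1, h2, h3⟩
  obtain ⟨hc0, hc1⟩ := hc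
  refine ⟨?_, ?_, ?_⟩ <;> simp only [leftSim] <;> nlinarith

lemma mapsTo_rightSim : MapsTo (rightSim c) triangle triangle := by
  rintro z ⟨h1, h2, h3⟩
  obtain ⟨hc0, hc1⟩ := hc
  refine ⟨?_, ?_, ?_⟩ <;> simp only [rightSim] <;> nlinarith

lemma mapsTo_bridge : MapsTo (bridge c) (Icc 0 1) triangle := by
  rintro u ⟨h1, h2⟩
  obtain ⟨hc0, hc1⟩ := hc
  refine ⟨?_, ?_, ?_⟩ <;> simp only [bridge] <;> nlinarith

lemma pieces_triangle_subset : pieces c triangle ⊆ triangle :=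
  union_subset (union_subset (mapsTo_leftSim hc).image_subset (mapsTo_bridge hc).image_subset)
    (mapsTo_rightSim hc).image_subset

lemma leftSim_re_le {z : ℂ} (hz : z ∈ triangle) : (leftSim c z).re ≤ c / 2 := by
  obtain ⟨h1, h2, h3⟩ := hz
  simp only [leftSim]
  nlinarith [hc.1]

lemma le_rightSim_re {z : ℂ} (hz : z ∈ triangle) : 1 - c / 2 ≤ (rightSim c z).re := by
  obtain ⟨h1, h2, h3⟩ := hz
  simp only [rightSim]
  nlinarith [hc.1]

end UnitInterval

section Collisions

variable (hc : c ∈ Ioo (0 : ℝ) 1) {z w : ℂ} (hz : z ∈ triangle)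
include hc hz

lemma leftSim_ne_rightSim (hw : w ∈ triangle) : leftSim c z ≠ rightSim c w := fun h => by
  have := leftSim_re_le (Ioo_subset_Icc_self hc) hz
  have := le_rightSim_re (Ioo_subset_Icc_self hc) hw
  rw [h] at *
  linarith [hc.2]

lemma eq_of_leftSim_eq_bridge {u : ℝ} (hu : 0 ≤ u) (h : leftSim c z = bridge c u) :
    z = 1 ∧ u = 0 := by
  have hre := leftSim_re_le (Ioo_subset_Icc_self hc) hz
  rw [h] at hre
  have hu : u = 0 := by simp only [bridge] at hre; nlinarith [hc.2]
  subst hu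
  exact ⟨leftSim_injective hc.1.ne' (h.trans leftSim_one.symm), rfl⟩

lemma eq_of_bridge_eq_rightSim {u : ℝ} (hu : u ≤ 1) (h : bridge c u = rightSim c z) :
    u = 1 ∧ z = 0 := by
  have hre := le_rightSim_re (Ioo_subset_Icc_self hc) hz
  rw [← h] at hre
  have hu : u = 1 := by simp only [bridge] at hre; nlinarith [hc.2]
  subst hu
  exact ⟨rfl, rightSim_injective hc.1.ne' (bridge_one.symm.trans h).symm⟩

end Collisions

-- The two similar copies are separated by the line `re = c / 2`, and the bridge is a segment.
lemma volume_pieces (hc : c ∈ Ioo (0 : ℝ) 1) {S : Set ℂ} (hS : S ⊆ triangle) :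
    volume (pieces c S) = ENNReal.ofReal (c ^ 2) * volume S := by
  set H : Set ℂ := {z | z.re ≤ c / 2}
  have hL : leftSim c '' S ⊆ H := by
    rintro _ ⟨z, hz, rfl⟩
    exact leftSim_re_le (Ioo_subset_Icc_self hc) (hS hz)
  have hR : Disjoint (rightSim c '' S) H := by
    refine disjoint_left.2 ?_
    rintro _ ⟨z, hz, rfl⟩ h
    linarith [show (rightSim c z).re ≤ c / 2 from h,
      le_rightSim_re (Ioo_subset_Icc_self hc) (hS hz), hc.2]
  have hB : volume (bridge c '' Icc 0 1) = 0 :=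
    measure_mono_null (by rintro _ ⟨u, -, rfl⟩; rfl) (volume_setOf_im_eq (c / 2))
  rw [pieces, union_right_comm, measure_congr (union_ae_eq_left_of_ae_eq_empty (ae_eq_empty.2 hB)),
    ← measure_inter_add_sdiff _ (measurableSet_le continuous_re.measurable measurable_const),
    union_inter_distrib_right, inter_eq_left.2 hL, hR.inter_eq, union_empty, union_sdiff_distrib,
    sdiff_eq_empty.2 hL, empty_union, hR.sdiff_eq_left, volume_image_leftSim,
    volume_image_rightSim, ← add_mul, ← ENNReal.ofReal_add (by positivity) (by positivity),
    add_halves]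

end Pieces

def step (c : ℝ) (f : ℝ → ℂ) (t : ℝ) : ℂ :=
  if t ≤ 1 / 3 then leftSim c (f (3 * t))
  else if t ≤ 2 / 3 then bridge c (3 * t - 1) else rightSim c (f (3 * t - 2))

section Step

variable {c : ℝ} {f g : ℝ → ℂ}

lemma step_eq_leftSim {t : ℝ} (ht : t ≤ 1 / 3) : step c f t = leftSim c (f (3 * t)) := if_pos ht

lemma step_eq_bridge (hf1 : f 1 = 1) {t : ℝ} (ht₁ : 1 / 3 ≤ t) (ht₂ : t ≤ 2 / 3) :
    step c f t = bridge c (3 * t - 1) := by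
  rcases ht₁.eq_or_lt with rfl | ht₁
  · norm_num [step, hf1, leftSim_one]
  · rw [step, if_neg (not_le.2 ht₁), if_pos ht₂]

lemma step_eq_rightSim (hf0 : f 0 = 0) {t : ℝ} (ht : 2 / 3 ≤ t) :
    step c f t = rightSim c (f (3 * t - 2)) := by
  rcases ht.eq_or_lt with rfl | ht
  · norm_num [step, hf0, bridge_one]
  · rw [step, if_neg (by linarith), if_neg (not_le.2 ht)]

lemma step_zero (hf0 : f 0 = 0) : step c f 0 = 0 := by simp [step, hf0, leftSim_zero]

lemma step_one (hf1 : f 1 = 1) : step c f 1 = 1 := by norm_num [step, hf1, rightSim_one]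

lemma continuous_step (hf : Continuous f) (hf0 : f 0 = 0) (hf1 : f 1 = 1) :
    Continuous (step c f) := by
  refine Continuous.if_le (by fun_prop) (Continuous.if_le (by fun_prop) (by fun_prop)
    continuous_id continuous_const ?_) continuous_id continuous_const ?_
  · rintro t rfl
    norm_num [hf0, bridge_one]
  · rintro t rfl
    norm_num [hf1, leftSim_one]

lemma mapsTo_step (hc : c ∈ Icc (0 : ℝ) 1) (hf : MapsTo f (Icc 0 1) triangle) :
    MapsTo (step c f) (Icc 0 1) triangle := by
  rintro t ⟨ht0, ht1⟩
  unfold step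
  split_ifs
  · exact mapsTo_leftSim hc (hf ⟨by linarith, by linarith⟩)
  · exact mapsTo_bridge hc ⟨by linarith, by linarith⟩
  · exact mapsTo_rightSim hc (hf ⟨by linarith, by linarith⟩)

lemma dist_step_le {ε : ℝ} (hfg : ∀ s ∈ Icc (0 : ℝ) 1, dist (f s) (g s) ≤ ε) {t : ℝ}
    (ht : t ∈ Icc (0 : ℝ) 1) : dist (step c f t) (step c g t) ≤ |c| / √2 * ε := by
  obtain ⟨ht0, ht1⟩ := ht
  unfold step
  split_ifs
  · rw [dist_leftSim]
    gcongr
    exact hfg _ ⟨by linarith, by linarith⟩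
  · rw [dist_self]
    exact mul_nonneg (by positivity) (dist_nonneg.trans (hfg 0 ⟨le_rfl, zero_le_one⟩))
  · rw [dist_rightSim]
    gcongr
    exact hfg _ ⟨by linarith, by linarith⟩

lemma tendsto_step {ι : Type*} {l : Filter ι} {F : ι → ℝ → ℂ}
    (hF : ∀ s ∈ Icc (0 : ℝ) 1, Tendsto (fun i => F i s) l (𝓝 (f s))) {t : ℝ}
    (ht : t ∈ Icc (0 : ℝ) 1) : Tendsto (fun i => step c (F i) t) l (𝓝 (step c f t)) := by
  obtain ⟨ht0, ht1⟩ := ht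
  unfold step
  split_ifs
  · exact (continuous_leftSim.tendsto _).comp (hF _ ⟨by linarith, by linarith⟩)
  · exact tendsto_const_nhds
  · exact (continuous_rightSim.tendsto _).comp (hF _ ⟨by linarith, by linarith⟩)

lemma image_step (hf0 : f 0 = 0) (hf1 : f 1 = 1) :
    step c f '' Icc 0 1 = pieces c (f '' Icc 0 1) := by
  apply Subset.antisymm
  · rintro _ ⟨t, ⟨ht0, ht1⟩, rfl⟩
    unfold step
    split_ifs
    · exact Or.inl (Or.inl (mem_image_of_mem _ (mem_image_of_mem f ⟨by linarith, by linarith⟩)))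
    · exact Or.inl (Or.inr (mem_image_of_mem _ ⟨by linarith, by linarith⟩))
    · exact Or.inr (mem_image_of_mem _ (mem_image_of_mem f ⟨by linarith, by linarith⟩))
  · rintro _ ((⟨_, ⟨s, ⟨hs0, hs1⟩, rfl⟩, rfl⟩ | ⟨u, ⟨hu0, hu1⟩, rfl⟩) |
      ⟨_, ⟨s, ⟨hs0, hs1⟩, rfl⟩, rfl⟩)
    · refine ⟨s / 3, ⟨by linarith, by linarith⟩, ?_⟩
      rw [step_eq_leftSim (by linarith), mul_div_cancel₀ _ three_ne_zero]
    · refine ⟨(u + 1) / 3, ⟨by linarith, by linarith⟩, ?_⟩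
      rw [step_eq_bridge hf1 (by linarith) (by linarith)]
      ring_nf
    · refine ⟨(s + 2) / 3, ⟨by linarith, by linarith⟩, ?_⟩
      rw [step_eq_rightSim hf0 (by linarith)]
      ring_nf

lemma exists_collision_of_step_eq (hc : c ∈ Ioo (0 : ℝ) 1) (hf : MapsTo f (Icc 0 1) triangle)
    (hf0 : f 0 = 0) (hf1 : f 1 = 1) {s t : ℝ} (hs : s ∈ Icc (0 : ℝ) 1) (ht : t ∈ Icc (0 : ℝ) 1)
    (h : step c f s = step c f t) :
    ∃ s' ∈ Icc (0 : ℝ) 1, ∃ t' ∈ Icc (0 : ℝ) 1, f s' = f t' ∧ 3 * |s - t| ≤ |s' - t'| := by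
  wlog hst : s ≤ t generalizing s t
  · obtain ⟨s', hs', t', ht', h', hle⟩ := this ht hs h.symm (le_of_not_ge hst)
    exact ⟨t', ht', s', hs', h'.symm, by rwa [abs_sub_comm, abs_sub_comm t']⟩
  have h3 : 3 * |s - t| = |3 * s - 3 * t| := by
    rw [← mul_sub, abs_mul, abs_of_pos (three_pos : (0 : ℝ) < 3)]
  obtain ⟨hs0, hs1⟩ := hs
  obtain ⟨ht0, ht1⟩ := ht
  have mem : ∀ x : ℝ, 0 ≤ x → x ≤ 1 → f x ∈ triangle := fun x h0 h1 => hf ⟨h0, h1⟩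
  unfold step at h
  split_ifs at h
  · exact ⟨3 * s, ⟨by linarith, by linarith⟩, 3 * t, ⟨by linarith, by linarith⟩,
      leftSim_injective hc.1.ne' h, h3.le⟩
  · obtain ⟨hfs, ht⟩ := eq_of_leftSim_eq_bridge hc (mem _ (by linarith) (by linarith))
      (by linarith) h
    exact ⟨3 * s, ⟨by linarith, by linarith⟩, 1, ⟨zero_le_one, le_rfl⟩, hfs.trans hf1.symm,
      (h3.trans (by congr 1; linarith)).le⟩
  · exact (leftSim_ne_rightSim hc (mem _ (by linarith) (by linarith))
      (mem _ (by linarith) (by linarith)) h).elim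
  · linarith
  · have : s = t := by linarith [bridge_injective hc.2.ne h]
    exact ⟨0, ⟨le_rfl, zero_le_one⟩, 0, ⟨le_rfl, zero_le_one⟩, rfl, by simp [this]⟩
  · obtain ⟨hs, hft⟩ := eq_of_bridge_eq_rightSim hc (mem _ (by linarith) (by linarith))
      (by linarith) h
    exact ⟨0, ⟨le_rfl, zero_le_one⟩, 3 * t - 2, ⟨by linarith, by linarith⟩,
      hf0.trans hft.symm, (h3.trans (by congr 1; linarith)).le⟩
  · linarith
  · linarith
  · exact ⟨3 * s - 2, ⟨by linarith, by linarith⟩, 3 * t - 2, ⟨by linarith, by linarith⟩,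
      rightSim_injective hc.1.ne' h, (h3.trans (by congr 1; ring)).le⟩

end Step

def approx : ℕ → (ℕ → ℝ) → ℝ → ℂ
  | 0, _ => fun t => t
  | n + 1, μ => step (μ 0) (approx n fun j => μ (j + 1))

def curve (μ : ℕ → ℝ) (t : ℝ) : ℂ := limUnder atTop fun n => approx n μ t

section Curve

variable {μ : ℕ → ℝ}

lemma approx_apply_zero (n : ℕ) (μ : ℕ → ℝ) : approx n μ 0 = 0 := by
  induction n generalizing μ with
  | zero => simp [approx]
  | succ n ih => exact step_zero (ih _)

lemma approx_apply_one (n : ℕ) (μ : ℕ → ℝ) : approx n μ 1 = 1 := by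
  induction n generalizing μ with
  | zero => simp [approx]
  | succ n ih => exact step_one (ih _)

lemma continuous_approx (n : ℕ) (μ : ℕ → ℝ) : Continuous (approx n μ) := by
  induction n generalizing μ with
  | zero => exact continuous_ofReal
  | succ n ih => exact continuous_step (ih _) (approx_apply_zero _ _) (approx_apply_one _ _)

lemma curve_apply_zero (μ : ℕ → ℝ) : curve μ 0 = 0 := by
  simp only [curve, approx_apply_zero]
  exact tendsto_const_nhds.limUnder_eq

lemma curve_apply_one (μ : ℕ → ℝ) : curve μ 1 = 1 := by
  simp only [curve, approx_apply_one]
  exact tendsto_const_nhds.limUnder_eq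

lemma one_div_sqrt_two_lt_one : 1 / √2 < 1 := by
  rw [div_lt_one (by positivity)]
  exact Real.one_lt_sqrt_two

lemma abs_div_sqrt_two_mul_le {c C : ℝ} (hc : c ∈ Ioo (0 : ℝ) 1) (hC : 0 ≤ C) (n : ℕ) :
    |c| / √2 * (C * (1 / √2) ^ n) ≤ C * (1 / √2) ^ (n + 1) :=
  calc |c| / √2 * (C * (1 / √2) ^ n) = c * (C * (1 / √2) ^ (n + 1)) := by
        rw [abs_of_pos hc.1]; ring
    _ ≤ C * (1 / √2) ^ (n + 1) := mul_le_of_le_one_left (by positivity) hc.2.le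

lemma tendsto_diam_triangle_mul_pow :
    Tendsto (fun n : ℕ => diam triangle * (1 / √2) ^ n) atTop (𝓝 0) := by
  simpa using (tendsto_pow_atTop_nhds_zero_of_lt_one (by positivity)
    one_div_sqrt_two_lt_one).const_mul (diam triangle)

variable (hμ : ∀ j, μ j ∈ Ioo (0 : ℝ) 1)
include hμ

lemma mapsTo_approx (n : ℕ) : MapsTo (approx n μ) (Icc 0 1) triangle := by
  induction n generalizing μ with
  | zero =>
    rintro t ⟨ht0, ht1⟩
    show (t : ℂ) ∈ triangle
    exact ⟨by simp, by simpa using ht0, by simpa using ht1⟩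
  | succ n ih => exact mapsTo_step (Ioo_subset_Icc_self (hμ 0)) (ih fun j => hμ (j + 1))

lemma dist_approx_succ_le (n : ℕ) {t : ℝ} (ht : t ∈ Icc (0 : ℝ) 1) :
    dist (approx n μ t) (approx (n + 1) μ t) ≤ diam triangle * (1 / √2) ^ n := by
  induction n generalizing μ t with
  | zero =>
    simpa using dist_le_diam_of_mem isCompact_triangle.isBounded (mapsTo_approx hμ 0 ht)
      (mapsTo_approx hμ 1 ht)
  | succ n ih =>
    exact (dist_step_le (fun s hs => ih (fun j => hμ (j + 1)) hs) ht).trans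
      (abs_div_sqrt_two_mul_le (hμ 0) diam_nonneg n)

lemma tendsto_approx {t : ℝ} (ht : t ∈ Icc (0 : ℝ) 1) :
    Tendsto (fun n => approx n μ t) atTop (𝓝 (curve μ t)) :=
  (cauchySeq_of_le_geometric _ _ one_div_sqrt_two_lt_one
    fun n => dist_approx_succ_le hμ n ht).tendsto_limUnder

lemma continuousOn_curve : ContinuousOn (curve μ) (Icc 0 1) := by
  have hbound := tendsto_diam_triangle_mul_pow.div_const (1 - 1 / √2)
  rw [zero_div] at hbound
  refine TendstoUniformlyOn.continuousOn (F := fun n => approx n μ) (p := atTop) ?_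
    (Frequently.of_forall fun n => (continuous_approx n μ).continuousOn)
  rw [Metric.tendstoUniformlyOn_iff]
  intro ε hε
  filter_upwards [hbound.eventually (gt_mem_nhds hε)] with n hn t ht
  rw [dist_comm]
  exact (dist_le_of_le_geometric_of_tendsto _ _ one_div_sqrt_two_lt_one
    (fun n => dist_approx_succ_le hμ n ht) (tendsto_approx hμ ht) n).trans_lt hn

lemma mapsTo_curve : MapsTo (curve μ) (Icc 0 1) triangle := fun _ ht =>
  isCompact_triangle.isClosed.mem_of_tendsto (tendsto_approx hμ ht)
    (Eventually.of_forall fun n => mapsTo_approx hμ n ht)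

lemma curve_eq_step : EqOn (curve μ) (step (μ 0) (curve fun j => μ (j + 1))) (Icc 0 1) :=
  fun _ ht => tendsto_nhds_unique ((tendsto_approx hμ ht).comp (tendsto_add_atTop_nat 1))
    (tendsto_step (fun _ hs => tendsto_approx (fun j => hμ (j + 1)) hs) ht)

lemma image_curve :
    curve μ '' Icc 0 1 = pieces (μ 0) ((curve fun j => μ (j + 1)) '' Icc 0 1) := by
  rw [(curve_eq_step hμ).image_eq, image_step (curve_apply_zero _) (curve_apply_one _)]

lemma three_pow_mul_abs_sub_le_one (n : ℕ) {s t : ℝ} (hs : s ∈ Icc (0 : ℝ) 1)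
    (ht : t ∈ Icc (0 : ℝ) 1) (h : curve μ s = curve μ t) : 3 ^ n * |s - t| ≤ 1 := by
  induction n generalizing μ s t with
  | zero =>
    rw [pow_zero, one_mul, abs_le]
    constructor <;> linarith [hs.1, hs.2, ht.1, ht.2]
  | succ n ih =>
    rw [curve_eq_step hμ hs, curve_eq_step hμ ht] at h
    obtain ⟨s', hs', t', ht', h', hle⟩ := exists_collision_of_step_eq (hμ 0)
      (mapsTo_curve fun j => hμ (j + 1)) (curve_apply_zero _) (curve_apply_one _) hs ht h
    calc 3 ^ (n + 1) * |s - t| = 3 ^ n * (3 * |s - t|) := by ring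
      _ ≤ 3 ^ n * |s' - t'| := by gcongr
      _ ≤ 1 := ih (fun j => hμ (j + 1)) hs' ht' h'

lemma injOn_curve : InjOn (curve μ) (Icc 0 1) := fun s hs t ht h => by
  by_contra hne
  obtain ⟨n, hn⟩ := pow_unbounded_of_one_lt (1 / |s - t|) (by norm_num : (1 : ℝ) < 3)
  rw [div_lt_iff₀ (abs_pos.2 (sub_ne_zero.2 hne))] at hn
  linarith [three_pow_mul_abs_sub_le_one hμ n hs ht h]

end Curve

def prefractal : ℕ → (ℕ → ℝ) → Set ℂ
  | 0, _ => triangle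
  | n + 1, μ => pieces (μ 0) (prefractal n fun j => μ (j + 1))

lemma exists_dist_le_of_mem_pieces {c ε : ℝ} (hε : 0 ≤ ε) {A B : Set ℂ}
    (hAB : ∀ x ∈ A, ∃ y ∈ B, dist x y ≤ ε) :
    ∀ x ∈ pieces c A, ∃ y ∈ pieces c B, dist x y ≤ |c| / √2 * ε := by
  rintro _ ((⟨x, hx, rfl⟩ | hx) | ⟨x, hx, rfl⟩)
  · obtain ⟨y, hy, hxy⟩ := hAB x hx
    exact ⟨_, Or.inl (Or.inl (mem_image_of_mem _ hy)), by rw [dist_leftSim]; gcongr⟩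
  · exact ⟨_, Or.inl (Or.inr hx), by rw [dist_self]; positivity⟩
  · obtain ⟨y, hy, hxy⟩ := hAB x hx
    exact ⟨_, Or.inr (mem_image_of_mem _ hy), by rw [dist_rightSim]; gcongr⟩

section Prefractal

variable {μ : ℕ → ℝ} (hμ : ∀ j, μ j ∈ Ioo (0 : ℝ) 1)
include hμ

lemma prefractal_subset_triangle (n : ℕ) : prefractal n μ ⊆ triangle := by
  induction n generalizing μ with
  | zero => exact subset_rfl
  | succ n ih =>
    exact (pieces_mono (ih fun j => hμ (j + 1))).trans
      (pieces_triangle_subset (Ioo_subset_Icc_self (hμ 0)))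

lemma prefractal_antitone : Antitone fun n => prefractal n μ := by
  refine antitone_nat_of_succ_le fun n => ?_
  induction n generalizing μ with
  | zero => exact prefractal_subset_triangle hμ 1
  | succ n ih => exact pieces_mono (ih fun j => hμ (j + 1))

omit hμ in
lemma isCompact_prefractal (n : ℕ) (μ : ℕ → ℝ) : IsCompact (prefractal n μ) := by
  induction n generalizing μ with
  | zero => exact isCompact_triangle
  | succ n ih => exact isCompact_pieces (ih _)

lemma image_curve_subset_prefractal (n : ℕ) : curve μ '' Icc 0 1 ⊆ prefractal n μ := by
  induction n generalizing μ with
  | zero => exact (mapsTo_curve hμ).image_subset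
  | succ n ih =>
    rw [image_curve hμ]
    exact pieces_mono (ih fun j => hμ (j + 1))

lemma exists_dist_le_of_mem_prefractal (n : ℕ) :
    ∀ x ∈ prefractal n μ, ∃ y ∈ curve μ '' Icc 0 1, dist x y ≤ diam triangle * (1 / √2) ^ n := by
  induction n generalizing μ with
  | zero =>
    intro x hx
    refine ⟨_, mem_image_of_mem _ ⟨le_rfl, zero_le_one⟩, ?_⟩
    simpa using dist_le_diam_of_mem isCompact_triangle.isBounded hx
      (mapsTo_curve hμ ⟨le_rfl, zero_le_one⟩)
  | succ n ih =>
    intro x hx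
    rw [image_curve hμ]
    obtain ⟨y, hy, hxy⟩ := exists_dist_le_of_mem_pieces (by positivity)
      (ih fun j => hμ (j + 1)) x hx
    exact ⟨y, hy, hxy.trans (abs_div_sqrt_two_mul_le (hμ 0) diam_nonneg n)⟩

lemma image_curve_eq_iInter_prefractal : curve μ '' Icc 0 1 = ⋂ n, prefractal n μ := by
  refine Subset.antisymm (subset_iInter fun n => image_curve_subset_prefractal hμ n) fun x hx => ?_
  rw [← ((isCompact_Icc.image_of_continuousOn (continuousOn_curve hμ)).isClosed).closure_eq,
    Metric.mem_closure_iff]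
  intro ε hε
  obtain ⟨n, hn⟩ := (tendsto_diam_triangle_mul_pow.eventually (gt_mem_nhds hε)).exists
  obtain ⟨y, hy, hxy⟩ := exists_dist_le_of_mem_prefractal hμ n x (mem_iInter.1 hx n)
  exact ⟨y, hy, hxy.trans_lt hn⟩

lemma volume_prefractal (n : ℕ) : volume (prefractal n μ) =
    ENNReal.ofReal (∏ j ∈ Finset.range n, μ j ^ 2) * volume triangle := by
  induction n generalizing μ with
  | zero => simp [prefractal]
  | succ n ih =>
    rw [prefractal, volume_pieces (hμ 0) (prefractal_subset_triangle (fun j => hμ (j + 1)) n),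
      ih fun j => hμ (j + 1), ← mul_assoc, ← ENNReal.ofReal_mul (by positivity),
      Finset.prod_range_succ' _ n, mul_comm _ (μ 0 ^ 2)]

lemma volume_image_curve {q : ℝ}
    (hq : Tendsto (fun n => ∏ j ∈ Finset.range n, μ j ^ 2) atTop (𝓝 q)) :
    volume (curve μ '' Icc 0 1) = ENNReal.ofReal q * volume triangle := by
  have hT := (isCompact_triangle.measure_lt_top (μ := volume)).ne
  refine tendsto_nhds_unique ?_ (ENNReal.Tendsto.mul_const
    ((ENNReal.continuous_ofReal.tendsto q).comp hq) (Or.inr hT))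
  rw [image_curve_eq_iInter_prefractal hμ]
  simp_rw [Function.comp_def, ← volume_prefractal hμ]
  exact tendsto_measure_iInter_atTop
    (fun n => (isCompact_prefractal n μ).measurableSet.nullMeasurableSet)
    (prefractal_antitone hμ) ⟨0, hT⟩

end Prefractal

-- `μ j ^ 2 = q ^ (1 / 2 / 2 ^ j)`, and these exponents sum to `1`.
lemma exists_tendsto_prod_sq {q : ℝ} (hq : q ∈ Ioo (0 : ℝ) 1) :
    ∃ μ : ℕ → ℝ, (∀ j, μ j ∈ Ioo (0 : ℝ) 1) ∧
      Tendsto (fun n => ∏ j ∈ Finset.range n, μ j ^ 2) atTop (𝓝 q) := by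
  obtain ⟨hq0, hq1⟩ := hq
  refine ⟨fun j => √(q ^ (1 / 2 / 2 ^ j : ℝ)), fun j => ⟨by positivity, ?_⟩, ?_⟩
  · rw [Real.sqrt_lt' one_pos, one_pow]
    exact Real.rpow_lt_one hq0.le hq1 (by positivity)
  · simp_rw [Real.sq_sqrt (Real.rpow_nonneg hq0.le _), ← Real.rpow_sum_of_pos hq0]
    simpa [Function.comp_def] using ((Real.continuousAt_const_rpow hq0.ne').tendsto.comp
      (hasSum_geometric_two' 1).tendsto_sum_nat)

theorem exists_injective_path_triangle {q : ℝ} (hq : q ∈ Ioo (0 : ℝ) 1) :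
    ∃ p : Path (0 : ℂ) 1, Function.Injective p ∧ range p ⊆ triangle ∧
      volume (range p) = ENNReal.ofReal q * volume triangle := by
  obtain ⟨μ, hμ, hprod⟩ := exists_tendsto_prod_sq hq
  have hrange : range (Path.ofLine (continuousOn_curve hμ) (curve_apply_zero μ)
      (curve_apply_one μ)) = curve μ '' Icc 0 1 := by
    rw [image_eq_range]; rfl
  refine ⟨Path.ofLine (continuousOn_curve hμ) (curve_apply_zero μ) (curve_apply_one μ),
    (injOn_curve hμ).injective, hrange ▸ (mapsTo_curve hμ).image_subset,
    hrange ▸ volume_image_curve hμ hprod⟩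

def lowerMap (κ : ℝ) (z : ℂ) : ℂ := ⟨2 * κ * z.im, z.re - κ * z.im⟩

def upperMap (z : ℂ) : ℂ := ⟨z.re + z.im, 1 - 2 * z.im⟩

def lowerHalf : Set ℂ := {z | 0 ≤ z.re ∧ 0 ≤ z.im ∧ z.re + z.im ≤ 1}

def upperHalf : Set ℂ := {z | z.re ≤ 1 ∧ z.im ≤ 1 ∧ 1 ≤ z.re + z.im}

section Halves

variable {κ : ℝ}

@[fun_prop]
lemma continuous_lowerMap : Continuous (lowerMap κ) := by unfold lowerMap; fun_prop

@[fun_prop]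
lemma continuous_upperMap : Continuous upperMap := by unfold upperMap; fun_prop

lemma lowerMap_injective (hκ : κ ≠ 0) : Function.Injective (lowerMap κ) := fun z w h => by
  have h1 := congrArg re h
  have h2 := congrArg im h
  simp only [lowerMap] at h1 h2
  have him : z.im = w.im := by simpa [hκ] using h1
  exact Complex.ext (by rw [him] at h2; linarith) him

lemma upperMap_injective : Function.Injective upperMap := fun z w h => by
  have h1 := congrArg re h
  have h2 := congrArg im h
  simp only [upperMap] at h1 h2
  exact Complex.ext (by linarith) (by linarith)

lemma volume_image_lowerMap (hκ : 0 ≤ κ) (S : Set ℂ) :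
    volume (lowerMap κ '' S) = ENNReal.ofReal (2 * κ) * volume S := by
  rw [volume_image_of_affine 0 (2 * κ) 1 (-κ) 0 0 (fun z => by simp [lowerMap])
    (fun z => by simp [lowerMap]; ring)]
  congr 2
  rw [show 0 * -κ - 2 * κ * 1 = -(2 * κ) by ring, abs_neg, abs_of_nonneg (by positivity)]

lemma volume_image_upperMap (S : Set ℂ) :
    volume (upperMap '' S) = ENNReal.ofReal 2 * volume S := by
  rw [volume_image_of_affine 1 1 0 (-2) 0 1 (fun z => by simp [upperMap])
    (fun z => by simp [upperMap]; ring)]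
  norm_num

lemma lowerHalf_subset_square : lowerHalf ⊆ Icc 0 1 ×ℂ Icc 0 1 := by
  rintro z ⟨h1, h2, h3⟩
  exact ⟨⟨h1, by linarith⟩, ⟨h2, by linarith⟩⟩

lemma upperHalf_subset_square : upperHalf ⊆ Icc 0 1 ×ℂ Icc 0 1 := by
  rintro z ⟨h1, h2, h3⟩
  exact ⟨⟨by linarith, h1⟩, ⟨by linarith, h2⟩⟩

lemma mapsTo_lowerMap (hκ : κ ∈ Icc (0 : ℝ) 1) : MapsTo (lowerMap κ) triangle lowerHalf := by
  rintro z ⟨h1, h2, h3⟩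
  obtain ⟨hκ0, hκ1⟩ := hκ
  refine ⟨?_, ?_, ?_⟩ <;> simp only [lowerMap] <;> nlinarith

lemma mapsTo_upperMap : MapsTo upperMap triangle upperHalf := by
  rintro z ⟨h1, h2, h3⟩
  refine ⟨?_, ?_, ?_⟩ <;> simp only [upperMap] <;> linarith

-- Why the lower arc is compressed: for `κ = 1` a leg of the triangle lands on the antidiagonal.
lemma eq_one_of_lowerMap_mem_upperHalf (hκ : κ ∈ Ioo (0 : ℝ) 1) {z : ℂ} (hz : z ∈ triangle)
    (h : lowerMap κ z ∈ upperHalf) : z = 1 := by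
  obtain ⟨h1, h2, h3⟩ := hz
  have h4 : 1 ≤ 2 * κ * z.im + (z.re - κ * z.im) := h.2.2
  obtain ⟨hκ0, hκ1⟩ := hκ
  have him : z.im = 0 := by nlinarith
  exact Complex.ext (by simp; nlinarith) (by simpa using him)

lemma square_subset_image_union :
    Icc 0 1 ×ℂ Icc 0 1 ⊆ lowerMap 1 '' triangle ∪ upperMap '' triangle := by
  rintro z ⟨⟨h1, h2⟩, ⟨h3, h4⟩⟩
  rcases le_total (z.re + z.im) 1 with h | h
  · refine Or.inl ⟨⟨z.im + z.re / 2, z.re / 2⟩, ⟨?_, ?_, ?_⟩, Complex.ext ?_ ?_⟩ <;>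
      simp [lowerMap] <;> linarith
  · refine Or.inr ⟨⟨z.re - (1 - z.im) / 2, (1 - z.im) / 2⟩, ⟨?_, ?_, ?_⟩, Complex.ext ?_ ?_⟩ <;>
      simp [upperMap] <;> linarith

end Halves

-- The square is the union of two affine images of the triangle, each of area `2 * volume triangle`.
lemma volume_triangle : volume triangle = ENNReal.ofReal (1 / 4) := by
  have hsq : Icc 0 1 ×ℂ Icc 0 1 = lowerMap 1 '' triangle ∪ upperMap '' triangle :=
    square_subset_image_union.antisymm (union_subset
      (((mapsTo_lowerMap ⟨zero_le_one, le_rfl⟩).image_subset).trans lowerHalf_subset_square)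
      ((mapsTo_upperMap.image_subset).trans upperHalf_subset_square))
  have hinter : volume (lowerMap 1 '' triangle ∩ upperMap '' triangle) = 0 := by
    refine measure_mono_null ?_ (volume_setOf_re_add_im_eq 1)
    rintro _ ⟨hl, ⟨z, hz, rfl⟩⟩
    exact le_antisymm ((mapsTo_lowerMap ⟨zero_le_one, le_rfl⟩).image_subset hl).2.2
      (mapsTo_upperMap hz).2.2
  have key := measure_union_add_inter (μ := volume) (lowerMap 1 '' triangle)
    (isCompact_triangle.image continuous_upperMap).measurableSet
  have hT := (isCompact_triangle.measure_lt_top (μ := volume)).ne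
  rw [← hsq, hinter, add_zero, volume_reProdIm, Real.volume_Icc, sub_zero, ENNReal.ofReal_one,
    one_mul, volume_image_lowerMap zero_le_one, volume_image_upperMap,
    ← ENNReal.ofReal_toReal hT, ← ENNReal.ofReal_mul (by norm_num),
    ← ENNReal.ofReal_mul (by norm_num), ← ENNReal.ofReal_add (by positivity) (by positivity),
    ← ENNReal.ofReal_one, ENNReal.ofReal_eq_ofReal_iff zero_le_one (by positivity)] at key
  rw [← ENNReal.ofReal_toReal hT]
  congr 1
  linarith

section Gluing

variable {κ : ℝ} (hκ : κ ∈ Ioo (0 : ℝ) 1)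
include hκ

lemma image_inter_image_subset {S S' : Set ℂ} (hS : S ⊆ triangle) (hS' : S' ⊆ triangle) :
    lowerMap κ '' S ∩ upperMap '' S' ⊆ {⟨0, 1⟩} := by
  rintro _ ⟨⟨z, hz, rfl⟩, ⟨w, hw, hzw⟩⟩
  rw [eq_one_of_lowerMap_mem_upperHalf hκ (hS hz) (hzw ▸ mapsTo_upperMap (hS' hw))]
  apply Complex.ext <;> simp [lowerMap]

lemma volume_image_union {S S' : Set ℂ} (hS : S ⊆ triangle) (hS' : S' ⊆ triangle)
    (hS'c : IsCompact S') : volume (lowerMap κ '' S ∪ upperMap '' S') =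
      ENNReal.ofReal (2 * κ) * volume S + ENNReal.ofReal 2 * volume S' := by
  rw [← add_zero (volume (_ ∪ _)), ← measure_mono_null (image_inter_image_subset hκ hS hS')
    (measure_singleton (μ := volume) _),
    measure_union_add_inter _ (hS'c.image continuous_upperMap).measurableSet,
    volume_image_lowerMap hκ.1.le, volume_image_upperMap]

lemma exists_path_trans {p p' : Path (0 : ℂ) 1} (hp : Function.Injective p)
    (hp' : Function.Injective p') (hpT : range p ⊆ triangle) (hpT' : range p' ⊆ triangle) :
    ∃ r : Path (0 : ℂ) ⟨1, 1⟩, Function.Injective r ∧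
      range r = lowerMap κ '' range p ∪ upperMap '' range p' := by
  let a : Path (0 : ℂ) ⟨0, 1⟩ :=
    (p.map (continuous_lowerMap (κ := κ))).cast (by apply Complex.ext <;> simp [lowerMap])
      (by apply Complex.ext <;> simp [lowerMap])
  let b : Path (⟨0, 1⟩ : ℂ) ⟨1, 1⟩ :=
    (p'.map continuous_upperMap).cast (by apply Complex.ext <;> simp [upperMap])
      (by apply Complex.ext <;> simp [upperMap])
  have ha : range a = lowerMap κ '' range p := range_comp (lowerMap κ) p
  have hb : range b = upperMap '' range p' := range_comp upperMap p'
  refine ⟨a.trans b, Path.injective_trans ((lowerMap_injective hκ.1.ne').comp hp)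
    (upperMap_injective.comp hp') ?_, by rw [Path.trans_range, ha, hb]⟩
  rw [ha, hb]
  exact image_inter_image_subset hκ hpT hpT'

end Gluing

-- The left arc fills `2κ · (1 + β)/2 · 1/4 = β/2` and the right one `2 · β · 1/4 = β/2`.
theorem exists_injective_path_square {β : ℝ} (hβ : β ∈ Ioo (0 : ℝ) 1) :
    ∃ p : Path (0 : ℂ) ⟨1, 1⟩, Function.Injective p ∧ range p ⊆ Icc 0 1 ×ℂ Icc 0 1 ∧
      volume (range p) = ENNReal.ofReal β := by
  obtain ⟨hβ0, hβ1⟩ := hβ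
  set κ := 2 * β / (1 + β) with hκ_def
  have hκ : κ ∈ Ioo (0 : ℝ) 1 := ⟨by positivity, by rw [div_lt_one (by linarith)]; linarith⟩
  obtain ⟨p, hp, hpT, hpv⟩ :=
    exists_injective_path_triangle (q := (1 + β) / 2) ⟨by positivity, by linarith⟩
  obtain ⟨p', hp', hpT', hpv'⟩ := exists_injective_path_triangle ⟨hβ0, hβ1⟩
  obtain ⟨r, hr, hrange⟩ := exists_path_trans hκ hp hp' hpT hpT'
  refine ⟨r, hr, hrange ▸ union_subset
    (((mapsTo_lowerMap (Ioo_subset_Icc_self hκ)).mono_left hpT).image_subset.trans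
      lowerHalf_subset_square)
    ((mapsTo_upperMap.mono_left hpT').image_subset.trans upperHalf_subset_square), ?_⟩
  rw [hrange, volume_image_union hκ hpT hpT' (isCompact_range p'.continuous), hpv, hpv',
    volume_triangle, ← ENNReal.ofReal_mul (by positivity), ← ENNReal.ofReal_mul (by positivity),
    ← ENNReal.ofReal_mul (by positivity), ← ENNReal.ofReal_mul (by positivity),
    ← ENNReal.ofReal_add (by positivity) (by positivity), hκ_def]
  congr 1
  field_simp
  ring

end

end LanceThomas

open LanceThomas in
/-- Lance–Thomas: for every `β ∈ (0,1)` there is a continuous injective curve in the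
unit square joining `(0,0)` to `(1,1)` whose image has measure exactly `β`. -/
theorem exists_lance_thomas_curve :
    ∀ β : ℝ, β ∈ Ioo (0 : ℝ) 1 →
      ∃ γ : ℝ → ℝ × ℝ,
        ContinuousOn γ (Icc 0 1) ∧
        InjOn γ (Icc 0 1) ∧
        γ '' Icc 0 1 ⊆ Icc (0 : ℝ) 1 ×ˢ Icc (0 : ℝ) 1 ∧
        γ 0 = (0, 0) ∧
        γ 1 = (1, 1) ∧
        volume (γ '' Icc 0 1) = ENNReal.ofReal β := by
  intro β hβ
  obtain ⟨p, hp, hsq, hvol⟩ := exists_injective_path_square hβ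
  have himage : (fun t => measurableEquivRealProd (p.extend t)) '' Icc 0 1 =
      measurableEquivRealProd '' range p := by
    rw [← image_image, p.image_extend_of_subset subset_rfl]
  refine ⟨fun t => measurableEquivRealProd (p.extend t),
    (equivRealProdCLM.continuous.comp p.continuous_extend).continuousOn,
    measurableEquivRealProd.injective.comp_injOn (p.injOn_extend hp), ?_, by simp, by simp, ?_⟩
  · rw [himage]
    rintro _ ⟨z, hz, rfl⟩
    exact hsq hz
  · rw [himage, MeasurableEquiv.image_eq_preimage_symm,
      (volume_preserving_equiv_real_prod.symm _).measure_preimage_equiv, hvol]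
end
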